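/- arXiv:2510.07031 — 7 statements merged into one kernel-verified Lean document; each statement's English description precedes it below -/
import Mathlib

section
/- Let f be a positively quadratic homogeneous (f(kx) = k²f(x) for k ≥ 0), continuous, coercive convex function on a Banach space X. Then f is strictly convex if and only if for every r > 0 the sublevel set B_r = {x : f(x) ≤ r} is a strictly convex body. -/
open Set Filter Topology

/-! For `r > 0` the frontier of `{f ≤ r}` is exactly the level set `{f = r}`, so strict convexity
of `f` makes every level point extreme in its sublevel set. Conversely, `√f` is a sublinear
functional, being `1`-homogeneous with convex unit ball `{f ≤ 1}`; hence
`f (a • x + b • y) ≤ (a √(f x) + b √(f y))²`, which is strictly below `a f x + b f y` unless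
`f x = f y` by strict convexity of `t ↦ t²`. In the remaining case `x` and `y` lie on one level
set, and a non-strict convexity inequality would put the combination on that level set in the
interior of a segment of the sublevel set, contradicting extremality. -/

theorem isBounded_setOf_le_of_tendsto_cobounded {α : Type*} [Bornology α] {f : α → ℝ}
    (hf : Tendsto f (Bornology.cobounded α) atTop) (r : ℝ) :
    Bornology.IsBounded {x | f x ≤ r} := by
  rw [Bornology.isBounded_def]
  filter_upwards [hf.eventually_gt_atTop r] with x hx using not_le.2 hx

theorem StrictConvexOn.mem_extremePoints_setOf_le {𝕜 E β : Type*} [Semiring 𝕜] [PartialOrder 𝕜]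
    [AddCommMonoid E] [Module 𝕜 E] [AddCommMonoid β] [LinearOrder β] [IsOrderedAddMonoid β]
    [Module 𝕜 β] [PosSMulStrictMono 𝕜 β] {f : E → β} (hf : StrictConvexOn 𝕜 univ f) {x : E}
    {r : β} (hx : f x = r) : x ∈ extremePoints 𝕜 {y | f y ≤ r} := by
  refine ⟨hx.le, ?_⟩
  rintro y hy z hz ⟨a, b, ha, hb, hab, rfl⟩
  by_contra hne
  have hyz : y ≠ z := by
    rintro rfl
    exact hne (Convex.combo_self hab y).symm
  exact (hf.lt_on_open_segment' trivial trivial hyz ha hb hab).not_ge (hx ▸ max_le hy hz)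

theorem ConvexOn.combo_lt_of_mem_extremePoints {𝕜 E β : Type*} [Semiring 𝕜] [PartialOrder 𝕜]
    [AddCommMonoid E] [SMul 𝕜 E] [AddCommMonoid β] [PartialOrder β] [Module 𝕜 β] {f : E → β}
    (hf : ConvexOn 𝕜 univ f) {r : β} (hext : ∀ z, f z = r → z ∈ extremePoints 𝕜 {y | f y ≤ r})
    {x y : E} (hxy : x ≠ y) (hx : f x = r) (hy : f y = r) {a b : 𝕜} (ha : 0 < a) (hb : 0 < b)
    (hab : a + b = 1) : f (a • x + b • y) < a • f x + b • f y := by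
  have hcombo : a • f x + b • f y = r := by rw [hx, hy, Convex.combo_self hab]
  refine (hf.2 trivial trivial ha.le hb.le hab).lt_of_ne fun heq => hxy ?_
  obtain ⟨hxz, hyz⟩ := (mem_extremePoints.1 (hext _ (heq.trans hcombo))).2 x hx.le y hy.le
    ⟨a, b, ha, hb, hab, rfl⟩
  exact hxz.trans hyz.symm

section SqHomogeneous

variable {X : Type*} {f : X → ℝ}

theorem apply_zero_of_sq_homogeneous [AddCommGroup X] [Module ℝ X]
    (hhom : ∀ k : ℝ, 0 ≤ k → ∀ x, f (k • x) = k ^ 2 * f x) : f 0 = 0 := by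
  simpa using hhom 0 le_rfl 0

theorem sqrt_apply_smul_of_sq_homogeneous [AddCommGroup X] [Module ℝ X]
    (hhom : ∀ k : ℝ, 0 ≤ k → ∀ x, f (k • x) = k ^ 2 * f x) {k : ℝ} (hk : 0 ≤ k) (x : X) :
    √(f (k • x)) = k * √(f x) := by
  rw [hhom k hk, Real.sqrt_mul (sq_nonneg k), Real.sqrt_sq hk]

theorem pos_of_ne_zero_of_tendsto_cobounded [NormedAddCommGroup X] [NormedSpace ℝ X]
    (hcoercive : Tendsto f (Bornology.cobounded X) atTop)
    (hhom : ∀ k : ℝ, 0 ≤ k → ∀ x, f (k • x) = k ^ 2 * f x) {x : X} (hx : x ≠ 0) : 0 < f x := by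
  have hray : Tendsto (fun k : ℝ => k • x) atTop (Bornology.cobounded X) := by
    rw [← tendsto_norm_atTop_iff_cobounded]
    refine (tendsto_id.atTop_mul_const (norm_pos_iff.2 hx)).congr' ?_
    filter_upwards [eventually_ge_atTop 0] with k hk
    rw [norm_smul, Real.norm_of_nonneg hk, id]
  obtain ⟨k, hfk, hk⟩ :=
    ((hcoercive.comp hray).eventually_gt_atTop 0).and (eventually_ge_atTop 0) |>.exists
  by_contra! hle
  have hnonpos : f (k • x) ≤ 0 :=
    (hhom k hk x).trans_le (mul_nonpos_of_nonneg_of_nonpos (sq_nonneg k) hle)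
  exact hnonpos.not_gt hfk

theorem mem_frontier_setOf_le_of_sq_homogeneous [AddCommGroup X] [Module ℝ X] [TopologicalSpace X]
    [ContinuousSMul ℝ X] (hhom : ∀ k : ℝ, 0 ≤ k → ∀ x, f (k • x) = k ^ 2 * f x) {r : ℝ}
    (hr : 0 < r) {z : X} (hz : f z = r) : z ∈ frontier {x | f x ≤ r} := by
  rw [frontier_eq_closure_inter_closure]
  refine ⟨subset_closure hz.le,
    mem_closure_of_tendsto (f := fun t : ℝ => t • z) (b := 𝓝[>] 1) ?_ ?_⟩
  · exact ((continuous_id.smul continuous_const).tendsto' 1 z (one_smul ℝ z)).mono_left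
      nhdsWithin_le_nhds
  · filter_upwards [self_mem_nhdsWithin] with t (ht : 1 < t)
    show ¬ f (t • z) ≤ r
    rw [hhom t (by positivity), hz, not_le]
    exact lt_mul_left hr (one_lt_pow₀ ht two_ne_zero)

variable [AddCommGroup X] [Module ℝ X]

theorem sqrt_apply_add_le_of_sq_homogeneous (hconv : ConvexOn ℝ univ f)
    (hhom : ∀ k : ℝ, 0 ≤ k → ∀ x, f (k • x) = k ^ 2 * f x) (hpos : ∀ x, x ≠ 0 → 0 < f x)
    (x y : X) : √(f (x + y)) ≤ √(f x) + √(f y) := by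
  have hf0 := apply_zero_of_sq_homogeneous hhom
  rcases eq_or_ne x 0 with rfl | hx
  · simp [hf0]
  rcases eq_or_ne y 0 with rfl | hy
  · simp [hf0]
  set α := √(f x)
  set β := √(f y)
  have hα : 0 < α := Real.sqrt_pos.2 (hpos x hx)
  have hβ : 0 < β := Real.sqrt_pos.2 (hpos y hy)
  have hunit : ∀ (z : X) (γ : ℝ), 0 < γ → √(f z) = γ → f (γ⁻¹ • z) = 1 := by
    intro z γ hγ hz
    rw [← Real.sqrt_eq_one, sqrt_apply_smul_of_sq_homogeneous hhom (inv_nonneg.2 hγ.le), hz,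
      inv_mul_cancel₀ hγ.ne']
  -- `x + y` is `α + β` times a convex combination of the unit vectors `α⁻¹ • x` and `β⁻¹ • y`
  have hsplit : x + y = (α + β) • ((α / (α + β)) • (α⁻¹ • x) + (β / (α + β)) • (β⁻¹ • y)) := by
    have hcoef : ∀ γ : ℝ, γ ≠ 0 → (α + β) * (γ / (α + β) * γ⁻¹) = 1 := fun γ hγ => by
      field_simp
    simp only [smul_add, smul_smul]
    rw [hcoef α hα.ne', hcoef β hβ.ne', one_smul, one_smul]
  have hcombo : f ((α / (α + β)) • (α⁻¹ • x) + (β / (α + β)) • (β⁻¹ • y)) ≤ 1 := by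
    have := hconv.2 (mem_univ (α⁻¹ • x)) (mem_univ (β⁻¹ • y)) (by positivity : 0 ≤ α / (α + β))
      (by positivity : 0 ≤ β / (α + β)) (by field_simp)
    rwa [hunit x α hα rfl, hunit y β hβ rfl, smul_eq_mul, smul_eq_mul, mul_one, mul_one,
      ← add_div, div_self (by positivity)] at this
  rw [hsplit, sqrt_apply_smul_of_sq_homogeneous hhom (by positivity)]
  exact mul_le_of_le_one_right (by positivity) (Real.sqrt_le_one.2 hcombo)

theorem combo_lt_of_apply_ne_of_sq_homogeneous (hconv : ConvexOn ℝ univ f)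
    (hhom : ∀ k : ℝ, 0 ≤ k → ∀ x, f (k • x) = k ^ 2 * f x) (hpos : ∀ x, x ≠ 0 → 0 < f x)
    {x y : X} (hxy : f x ≠ f y) {a b : ℝ} (ha : 0 < a) (hb : 0 < b) (hab : a + b = 1) :
    f (a • x + b • y) < a • f x + b • f y := by
  have hf0 := apply_zero_of_sq_homogeneous hhom
  have hsq : ∀ z, √(f z) ^ 2 = f z := fun z => Real.sq_sqrt <| by
    rcases eq_or_ne z 0 with rfl | hz
    exacts [hf0.ge, (hpos z hz).le]
  have hsqrt : √(f (a • x + b • y)) ≤ a * √(f x) + b * √(f y) := by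
    rw [← sqrt_apply_smul_of_sq_homogeneous hhom ha.le,
      ← sqrt_apply_smul_of_sq_homogeneous hhom hb.le]
    exact sqrt_apply_add_le_of_sq_homogeneous hconv hhom hpos _ _
  have hne : √(f x) ≠ √(f y) := fun h => hxy (by rw [← hsq x, ← hsq y, h])
  calc f (a • x + b • y) = √(f (a • x + b • y)) ^ 2 := (hsq _).symm
    _ ≤ (a * √(f x) + b * √(f y)) ^ 2 := by gcongr
    _ < a * √(f x) ^ 2 + b * √(f y) ^ 2 :=
      (strictConvexOn_pow le_rfl).2 (Real.sqrt_nonneg _) (Real.sqrt_nonneg _) hne ha hb hab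
    _ = a • f x + b • f y := by rw [hsq, hsq, smul_eq_mul, smul_eq_mul]

theorem strictConvexOn_of_sq_homogeneous_of_mem_extremePoints (hconv : ConvexOn ℝ univ f)
    (hhom : ∀ k : ℝ, 0 ≤ k → ∀ x, f (k • x) = k ^ 2 * f x) (hpos : ∀ x, x ≠ 0 → 0 < f x)
    (hext : ∀ r, 0 < r → ∀ z, f z = r → z ∈ extremePoints ℝ {x | f x ≤ r}) :
    StrictConvexOn ℝ univ f := by
  refine ⟨convex_univ, fun x _ y _ hxy a b ha hb hab => ?_⟩
  by_cases hlevel : f x = f y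
  · have hr : 0 < f x := by
      rcases eq_or_ne x 0 with rfl | hx
      exacts [hlevel ▸ hpos y (Ne.symm hxy), hpos x hx]
    exact hconv.combo_lt_of_mem_extremePoints (hext _ hr) hxy rfl hlevel.symm ha hb hab
  · exact combo_lt_of_apply_ne_of_sq_homogeneous hconv hhom hpos hlevel ha hb hab

end SqHomogeneous

theorem strictly_convex_iff_sublevels_strictly_convex_general
    {X : Type*} [NormedAddCommGroup X] [NormedSpace ℝ X]
    (f : X → ℝ) (hconv : ConvexOn ℝ univ f) (hcont : Continuous f)
    (hcoercive : Tendsto f (Bornology.cobounded X) atTop)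
    (hhom : ∀ k : ℝ, 0 ≤ k → ∀ x, f (k • x) = k ^ 2 * f x) :
    StrictConvexOn ℝ univ f ↔
      ∀ r : ℝ, 0 < r →
        Bornology.IsBounded {x | f x ≤ r} ∧ IsClosed {x | f x ≤ r} ∧
          Convex ℝ {x | f x ≤ r} ∧ (interior {x | f x ≤ r}).Nonempty ∧
          ∀ x ∈ frontier {x | f x ≤ r}, x ∈ Set.extremePoints ℝ {x | f x ≤ r} := by
  constructor
  · intro hstrict r hr
    have hzero : f 0 < r := by rwa [apply_zero_of_sq_homogeneous hhom]
    have hinterior : {x | f x < r} ⊆ interior {x | f x ≤ r} :=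
      interior_maximal (fun x (hx : f x < r) => hx.le) (isOpen_lt hcont continuous_const)
    exact ⟨isBounded_setOf_le_of_tendsto_cobounded hcoercive r,
      isClosed_le hcont continuous_const, by simpa using hconv.convex_le r, ⟨0, hinterior hzero⟩,
      fun x hx => hstrict.mem_extremePoints_setOf_le
        (frontier_le_subset_eq hcont continuous_const hx)⟩
  · intro hbody
    refine strictConvexOn_of_sq_homogeneous_of_mem_extremePoints hconv hhom
      (fun x hx => pos_of_ne_zero_of_tendsto_cobounded hcoercive hhom hx) fun r hr z hz => ?_
    exact (hbody r hr).2.2.2.2 z (mem_frontier_setOf_le_of_sq_homogeneous hhom hr hz)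

/-- A positively quadratic homogeneous continuous coercive convex
function `f` on a Banach space `X` is strictly convex iff for every `r > 0` the sublevel
set `{x | f x ≤ r}` is a strictly convex body. -/
theorem strictly_convex_iff_sublevels_strictly_convex
    {X : Type*} [NormedAddCommGroup X] [NormedSpace ℝ X] [CompleteSpace X]
    (f : X → ℝ) (hconv : ConvexOn ℝ univ f) (hcont : Continuous f)
    (hcoercive : Tendsto f (Bornology.cobounded X) atTop)
    (hhom : ∀ k : ℝ, 0 ≤ k → ∀ x, f (k • x) = k ^ 2 * f x) :
    StrictConvexOn ℝ univ f ↔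
      ∀ r : ℝ, 0 < r →
        Bornology.IsBounded {x | f x ≤ r} ∧ IsClosed {x | f x ≤ r} ∧
          Convex ℝ {x | f x ≤ r} ∧ (interior {x | f x ≤ r}).Nonempty ∧
          ∀ x ∈ frontier {x | f x ≤ r}, x ∈ Set.extremePoints ℝ {x | f x ≤ r} :=
  strictly_convex_iff_sublevels_strictly_convex_general f hconv hcont hcoercive hhom
end

section
/- Let B be a convex body in a Banach space X. Then B is strictly convex if and only if for every z ∈ int B the function f = (1/2)p_z², where p_z is the Minkowski functional of B - z, is a strictly convex function; and this holds if and only if there exists some z ∈ int B for which (1/2)p_z² is strictly convex. -/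
open Set Topology

/-! Both conditions are equivalent to `StrictConvex ℝ B` (open segments
between distinct points of `B` lie in its interior), which is invariant under translation.
For a closed convex body `C` around `0`, the gauge is convex, so `gauge C ^ 2` can fail to be
strictly convex only along a segment on which the gauge is constant; after rescaling this is a
segment of the boundary `{gauge C = 1}`, and such segments are exactly what strict convexity
of `C` forbids. -/

section RealFunction

variable {E : Type*} [AddCommMonoid E] [Module ℝ E] {s : Set E} {f : E → ℝ}

theorem StrictConvexOn.div_const (hf : StrictConvexOn ℝ s f) {c : ℝ} (hc : 0 < c) :
    StrictConvexOn ℝ s (fun x => f x / c) := by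
  refine ⟨hf.1, fun x hx y hy hxy a b ha hb hab => ?_⟩
  calc f (a • x + b • y) / c < (a • f x + b • f y) / c :=
        div_lt_div_of_pos_right (hf.2 hx hy hxy ha hb hab) hc
    _ = a • (f x / c) + b • (f y / c) := by simp only [smul_eq_mul]; ring

theorem strictConvexOn_div_const_iff {c : ℝ} (hc : 0 < c) :
    StrictConvexOn ℝ s (fun x => f x / c) ↔ StrictConvexOn ℝ s f :=
  ⟨fun h => by simpa [div_div_eq_mul_div, hc.ne'] using h.div_const (inv_pos.2 hc),
    fun h => h.div_const hc⟩

theorem ConvexOn.strictConvexOn_sq (hf : ConvexOn ℝ s f) (hf₀ : ∀ x ∈ s, 0 ≤ f x)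
    (hlevel : ∀ x ∈ s, ∀ y ∈ s, x ≠ y → f x = f y →
      ∀ ⦃a b : ℝ⦄, 0 < a → 0 < b → a + b = 1 → f (a • x + b • y) < f x) :
    StrictConvexOn ℝ s (fun x => f x ^ 2) := by
  refine ⟨hf.1, fun x hx y hy hxy a b ha hb hab => ?_⟩
  have hmem := hf.1 hx hy ha.le hb.le hab
  obtain heq | hne := eq_or_ne (f x) (f y)
  · calc f (a • x + b • y) ^ 2 < f x ^ 2 :=
          pow_lt_pow_left₀ (hlevel x hx y hy hxy heq ha hb hab) (hf₀ _ hmem) two_ne_zero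
      _ = a • f x ^ 2 + b • f y ^ 2 := by
          rw [← heq, ← add_smul, hab, one_smul]
  · calc f (a • x + b • y) ^ 2 ≤ (a • f x + b • f y) ^ 2 :=
          pow_le_pow_left₀ (hf₀ _ hmem) (hf.2 hx hy ha.le hb.le hab) 2
      _ < a • f x ^ 2 + b • f y ^ 2 :=
          (strictConvexOn_pow le_rfl).2 (hf₀ x hx) (hf₀ y hy) hne ha hb hab

end RealFunction

theorem strictConvex_iff_frontier_subset_extremePoints {E : Type*} [AddCommGroup E]
    [Module ℝ E] [TopologicalSpace E] {s : Set E} (hconv : Convex ℝ s) (hcl : IsClosed s) :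
    StrictConvex ℝ s ↔ frontier s ⊆ extremePoints ℝ s := by
  refine ⟨fun h => hcl.frontier_eq ▸ h.sdiff_interior_subset_extremePoints, ?_⟩
  intro h x hx y hy hxy a b ha hb hab
  by_contra hint
  have hfr : a • x + b • y ∈ frontier s := hcl.frontier_eq ▸ ⟨hconv hx hy ha.le hb.le hab, hint⟩
  have hseg : a • x + b • y ∈ openSegment ℝ x y := ⟨a, b, ha, hb, hab, rfl⟩
  obtain ⟨hxw, hyw⟩ := (mem_extremePoints.1 (h hfr)).2 x hx y hy hseg
  exact hxy (hxw.trans hyw.symm)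

theorem strictConvex_image_sub_const_iff {𝕜 E : Type*} [Semiring 𝕜] [PartialOrder 𝕜]
    [AddCommGroup E] [Module 𝕜 E] [TopologicalSpace E] [ContinuousAdd E] {s : Set E} (z : E) :
    StrictConvex 𝕜 ((fun x => x - z) '' s) ↔ StrictConvex 𝕜 s :=
  ⟨fun h => by simpa [image_image] using h.add_right z,
    fun h => by simpa [sub_eq_add_neg] using h.add_right (-z)⟩

theorem convexOn_gauge {E : Type*} [AddCommGroup E] [Module ℝ E] {s : Set E}
    (hs : Convex ℝ s) (habs : Absorbent ℝ s) : ConvexOn ℝ univ (gauge s) :=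
  ⟨convex_univ, fun x _ y _ a b ha hb _ => (gauge_add_le hs habs _ _).trans_eq <| by
    rw [gauge_smul_of_nonneg ha, gauge_smul_of_nonneg hb]⟩

section Gauge

variable {E : Type*} [AddCommGroup E] [Module ℝ E] [TopologicalSpace E] [IsTopologicalAddGroup E]
  [ContinuousSMul ℝ E] {C : Set E}

theorem StrictConvex.gauge_combo_lt_of_gauge_eq [T1Space E] (hC : StrictConvex ℝ C)
    (hC₀ : C ∈ 𝓝 0) (hCc : IsClosed C) (hCb : Bornology.IsVonNBounded ℝ C) {x y : E}
    (hxy : x ≠ y) (hg : gauge C x = gauge C y) {a b : ℝ} (ha : 0 < a) (hb : 0 < b)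
    (hab : a + b = 1) : gauge C (a • x + b • y) < gauge C x := by
  have habs : Absorbent ℝ C := absorbent_nhds_zero hC₀
  have hr : 0 < gauge C x := by
    refine (gauge_pos habs hCb).2 fun hx => hxy ?_
    rw [hx, eq_comm, ← gauge_eq_zero habs hCb, ← hg, hx, gauge_zero]
  set r := gauge C x
  have hmem : ∀ v, gauge C v = r → r⁻¹ • v ∈ C := fun v hv => by
    rw [← hCc.closure_eq, ← gauge_le_one_iff_mem_closure hC.convex hC₀,
      gauge_smul_of_nonneg (inv_nonneg.2 hr.le), hv, smul_eq_mul, inv_mul_cancel₀ hr.ne']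
  have hne : r⁻¹ • x ≠ r⁻¹ • y := (smul_right_injective E (inv_ne_zero hr.ne')).ne hxy
  have hlt : gauge C (a • r⁻¹ • x + b • r⁻¹ • y) < 1 :=
    (gauge_lt_one_iff_mem_interior hC.convex hC₀).2
      (hC (hmem x rfl) (hmem y hg.symm) hne ha hb hab)
  calc gauge C (a • x + b • y) = r * gauge C (a • r⁻¹ • x + b • r⁻¹ • y) := by
        rw [← smul_eq_mul, ← gauge_smul_of_nonneg hr.le, smul_add, smul_comm r a,
          smul_comm r b, smul_inv_smul₀ hr.ne', smul_inv_smul₀ hr.ne']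
    _ < r := mul_lt_of_lt_one_right hr hlt

theorem StrictConvex.strictConvexOn_gauge_sq [T1Space E] (hC : StrictConvex ℝ C)
    (hC₀ : C ∈ 𝓝 0) (hCc : IsClosed C) (hCb : Bornology.IsVonNBounded ℝ C) :
    StrictConvexOn ℝ univ (fun x => gauge C x ^ 2) :=
  (convexOn_gauge hC.convex (absorbent_nhds_zero (𝕜 := ℝ) hC₀)).strictConvexOn_sq
    (fun _ _ => gauge_nonneg _)
    (fun _ _ _ _ hxy hg _ _ ha hb hab => hC.gauge_combo_lt_of_gauge_eq hC₀ hCc hCb hxy hg ha hb hab)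

theorem strictConvex_of_strictConvexOn_gauge_sq (hC : Convex ℝ C) (hC₀ : C ∈ 𝓝 0)
    (h : StrictConvexOn ℝ univ (fun x => gauge C x ^ 2)) : StrictConvex ℝ C := by
  intro x hx y hy hxy a b ha hb hab
  rw [← gauge_lt_one_iff_mem_interior hC hC₀]
  refine (pow_lt_one_iff_of_nonneg (gauge_nonneg _) two_ne_zero).1 ?_
  calc gauge C (a • x + b • y) ^ 2 < a • gauge C x ^ 2 + b • gauge C y ^ 2 :=
        h.2 (mem_univ x) (mem_univ y) hxy ha hb hab
    _ ≤ a • 1 + b • 1 := by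
        gcongr
        · exact pow_le_one₀ (gauge_nonneg _) (gauge_le_one_of_mem hx)
        · exact pow_le_one₀ (gauge_nonneg _) (gauge_le_one_of_mem hy)
    _ = 1 := by rw [← add_smul, hab, one_smul]

theorem strictConvex_iff_strictConvexOn_gauge_sq [T1Space E] (hC : Convex ℝ C) (hC₀ : C ∈ 𝓝 0)
    (hCc : IsClosed C) (hCb : Bornology.IsVonNBounded ℝ C) :
    StrictConvex ℝ C ↔ StrictConvexOn ℝ univ (fun x => gauge C x ^ 2) :=
  ⟨fun h => h.strictConvexOn_gauge_sq hC₀ hCc hCb, strictConvex_of_strictConvexOn_gauge_sq hC hC₀⟩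

end Gauge

theorem strictConvex_iff_strictConvexOn_gauge_image_sub_sq {X : Type*} [NormedAddCommGroup X]
    [NormedSpace ℝ X] {B : Set X} (hBbd : Bornology.IsBounded B) (hBclosed : IsClosed B)
    (hBconv : Convex ℝ B) {z : X} (hz : z ∈ interior B) :
    StrictConvex ℝ B ↔
      StrictConvexOn ℝ univ (fun x => gauge ((fun b => b - z) '' B) x ^ 2 / 2) := by
  rw [← strictConvex_image_sub_const_iff z, strictConvexOn_div_const_iff two_pos]
  refine strictConvex_iff_strictConvexOn_gauge_sq ?_ ?_ ?_ ?_
  · simpa [neg_add_eq_sub] using hBconv.translate (-z)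
  · simpa using (Homeomorph.subRight z).isOpenMap.image_mem_nhds (mem_interior_iff_mem_nhds.1 hz)
  · exact (Homeomorph.subRight z).isClosedMap _ hBclosed
  · rw [← sub_singleton]
    exact NormedSpace.isVonNBounded_of_isBounded ℝ (hBbd.sub Bornology.isBounded_singleton)

theorem strictly_convex_body_iff_gauge_sq_strictly_convex_general
    {X : Type*} [NormedAddCommGroup X] [NormedSpace ℝ X]
    (B : Set X) (hBbd : Bornology.IsBounded B) (hBclosed : IsClosed B)
    (hBconv : Convex ℝ B) (hBint : (interior B).Nonempty) :
    ((∀ x ∈ frontier B, x ∈ Set.extremePoints ℝ B) ↔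
      ∀ z ∈ interior B,
        StrictConvexOn ℝ univ (fun x => gauge ((fun b => b - z) '' B) x ^ 2 / 2)) ∧
    ((∀ x ∈ frontier B, x ∈ Set.extremePoints ℝ B) ↔
      ∃ z ∈ interior B,
        StrictConvexOn ℝ univ (fun x => gauge ((fun b => b - z) '' B) x ^ 2 / 2)) := by
  have hB : (∀ x ∈ frontier B, x ∈ Set.extremePoints ℝ B) ↔ StrictConvex ℝ B :=
    (strictConvex_iff_frontier_subset_extremePoints hBconv hBclosed).symm
  have hgauge := fun z (hz : z ∈ interior B) =>
    strictConvex_iff_strictConvexOn_gauge_image_sub_sq hBbd hBclosed hBconv hz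
  obtain ⟨z₀, hz₀⟩ := hBint
  rw [hB]
  exact ⟨⟨fun h z hz => (hgauge z hz).1 h, fun h => (hgauge z₀ hz₀).2 (h z₀ hz₀)⟩,
    ⟨fun h => ⟨z₀, hz₀, (hgauge z₀ hz₀).1 h⟩, fun ⟨z, hz, h⟩ => (hgauge z hz).2 h⟩⟩

/-- A convex body `B` in a Banach space `X` is strictly convex
(every boundary point is an extreme point) iff for every `z ∈ interior B` the function
`(1/2)·(gauge of B - z)²` is strictly convex, and iff there exists some `z ∈ interior B`
for which this function is strictly convex. -/
theorem strictly_convex_body_iff_gauge_sq_strictly_convex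
    {X : Type*} [NormedAddCommGroup X] [NormedSpace ℝ X] [CompleteSpace X]
    (B : Set X) (hBbd : Bornology.IsBounded B) (hBclosed : IsClosed B)
    (hBconv : Convex ℝ B) (hBint : (interior B).Nonempty) :
    ((∀ x ∈ frontier B, x ∈ Set.extremePoints ℝ B) ↔
      ∀ z ∈ interior B,
        StrictConvexOn ℝ univ (fun x => gauge ((fun b => b - z) '' B) x ^ 2 / 2)) ∧
    ((∀ x ∈ frontier B, x ∈ Set.extremePoints ℝ B) ↔
      ∃ z ∈ interior B,
        StrictConvexOn ℝ univ (fun x => gauge ((fun b => b - z) '' B) x ^ 2 / 2)) :=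
  strictly_convex_body_iff_gauge_sq_strictly_convex_general B hBbd hBclosed hBconv hBint
end

section
/- Let f, g be nonnegative continuous positively quadratic homogeneous convex functions on a Banach space X. Then the Fenchel conjugate of their sum equals the infimal convolution of their conjugates: F(f+g) = F(f) □ F(g), where (φ □ ψ)(x*) = inf{φ(x*-y*) + ψ(y*) : y* ∈ X*}. -/
open Set Filter Metric Topology

/-- The Fenchel conjugate of a real-valued function, with values in `EReal`. -/
noncomputable def fenchelConj {X : Type*} [NormedAddCommGroup X] [NormedSpace ℝ X]
    (f : X → ℝ) (φ : X →L[ℝ] ℝ) : EReal :=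
  ⨆ x : X, ((φ x - f x : ℝ) : EReal)

/-- For nonnegative continuous positively quadratic homogeneous convex
functions `f, g` on a Banach space `X`, the Fenchel conjugate of `f + g` is the infimal
convolution of the conjugates: `F(f+g) = F(f) □ F(g)`. -/
theorem fenchel_conj_add_eq_infConvolution
    {X : Type*} [NormedAddCommGroup X] [NormedSpace ℝ X] [CompleteSpace X]
    (f g : X → ℝ)
    (hf : ConvexOn ℝ univ f) (hfc : Continuous f) (hf0 : ∀ x, 0 ≤ f x)
    (hfh : ∀ k : ℝ, 0 ≤ k → ∀ x, f (k • x) = k ^ 2 * f x)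
    (hg : ConvexOn ℝ univ g) (hgc : Continuous g) (hg0 : ∀ x, 0 ≤ g x)
    (hgh : ∀ k : ℝ, 0 ≤ k → ∀ x, g (k • x) = k ^ 2 * g x) :
    ∀ φ : X →L[ℝ] ℝ,
      fenchelConj (fun x => f x + g x) φ =
        ⨅ ψ : X →L[ℝ] ℝ, fenchelConj f (φ - ψ) + fenchelConj g ψ := by
  intro φ
  refine le_antisymm ?_ ?_
  · -- easy direction
    refine le_iInf fun ψ => iSup_le fun x => ?_
    have hsplit : (φ x - (f x + g x) : ℝ) = ((φ - ψ) x - f x) + (ψ x - g x) := by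
      simp [ContinuousLinearMap.sub_apply]; ring
    calc ((φ x - (f x + g x) : ℝ) : EReal)
        = (((φ - ψ) x - f x : ℝ) : EReal) + ((ψ x - g x : ℝ) : EReal) := by
          rw [← EReal.coe_add, ← hsplit]
      _ ≤ fenchelConj f (φ - ψ) + fenchelConj g ψ :=
          add_le_add (le_iSup (fun x => (((φ - ψ) x - f x : ℝ) : EReal)) x)
            (le_iSup (fun x => ((ψ x - g x : ℝ) : EReal)) x)
  · -- hard direction
    by_cases hT : fenchelConj (fun x => f x + g x) φ = ⊤
    · rw [hT]; exact le_top
    have hbot : fenchelConj (fun x => f x + g x) φ ≠ ⊥ := by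
      refine ne_of_gt (lt_of_lt_of_le (EReal.bot_lt_coe (φ 0 - (f 0 + g 0))) ?_)
      exact le_iSup (fun x => ((φ x - (f x + g x) : ℝ) : EReal)) 0
    set c : ℝ := (fenchelConj (fun x => f x + g x) φ).toReal with hcdef
    have hFc : fenchelConj (fun x => f x + g x) φ = (c : EReal) :=
      (EReal.coe_toReal hT hbot).symm
    have hc : ∀ x, φ x - (f x + g x) ≤ c := by
      intro x
      have h := le_iSup (fun x => ((φ x - (f x + g x) : ℝ) : EReal)) x
      rw [show (⨆ x, ((φ x - (f x + g x) : ℝ) : EReal)) =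
          fenchelConj (fun x => f x + g x) φ from rfl, hFc] at h
      exact_mod_cast h
    -- the auxiliary convex function u and concave function -g
    set u : X → ℝ := fun x => f x - φ x + c with hu
    have hucont : Continuous u := (hfc.sub φ.continuous).add continuous_const
    have huconv : ConvexOn ℝ univ u := by
      refine ⟨convex_univ, fun x _ y _ a b ha hb hab => ?_⟩
      have h1 := hf.2 (mem_univ x) (mem_univ y) ha hb hab
      simp only [hu, smul_eq_mul, map_add, map_smul] at h1 ⊢
      have hcc : c = a * c + b * c := by rw [← add_mul, hab, one_mul]
      linarith [h1, hcc]
    have hgconc : ConcaveOn ℝ univ (fun x => -g x) := hg.neg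
    -- separation of the strict epigraph of u from the hypograph of -g
    have hAconv : Convex ℝ {p : X × ℝ | p.1 ∈ univ ∧ u p.1 < p.2} :=
      huconv.convex_strict_epigraph
    have hAopen : IsOpen {p : X × ℝ | p.1 ∈ univ ∧ u p.1 < p.2} := by
      have : {p : X × ℝ | p.1 ∈ univ ∧ u p.1 < p.2} = {p : X × ℝ | u p.1 < p.2} := by
        ext p; simp
      rw [this]
      exact isOpen_lt (hucont.comp continuous_fst) continuous_snd
    have hBconv : Convex ℝ {p : X × ℝ | p.1 ∈ univ ∧ p.2 ≤ -g p.1} :=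
      hgconc.convex_hypograph
    have hdisj : Disjoint {p : X × ℝ | p.1 ∈ univ ∧ u p.1 < p.2}
        {p : X × ℝ | p.1 ∈ univ ∧ p.2 ≤ -g p.1} := by
      rw [Set.disjoint_left]
      rintro ⟨x, t⟩ ⟨-, h1⟩ ⟨-, h2⟩
      simp only [hu] at h1
      have := hc x
      simp only at h1 h2
      linarith
    obtain ⟨L, s, hA, hB⟩ := geometric_hahn_banach_open hAconv hAopen hBconv hdisj
    set β : ℝ := L (0, 1) with hβdef
    have hL : ∀ (x : X) (t : ℝ), L (x, t) = L (x, 0) + t * β := by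
      intro x t
      have : ((x, t) : X × ℝ) = (x, (0 : ℝ)) + t • ((0 : X), (1 : ℝ)) := by
        simp [Prod.ext_iff]
      rw [this, map_add, map_smul, smul_eq_mul]
    have hL00 : L ((0 : X), (0 : ℝ)) = 0 := by
      have : ((0 : X), (0 : ℝ)) = (0 : X × ℝ) := rfl
      rw [this, map_zero]
    -- β < 0
    have hmemA0 : ((0 : X), u 0 + 1) ∈ {p : X × ℝ | p.1 ∈ univ ∧ u p.1 < p.2} :=
      ⟨mem_univ _, show u 0 < u 0 + 1 by linarith⟩
    have hmemB0 : ((0 : X), -g 0) ∈ {p : X × ℝ | p.1 ∈ univ ∧ p.2 ≤ -g p.1} :=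
      ⟨mem_univ _, le_refl _⟩
    have h1 := hA _ hmemA0
    have h2 := hB _ hmemB0
    rw [hL, hL00] at h1 h2
    have hu0 : u 0 = f 0 + c := by simp [hu]
    have hc0 := hc 0
    simp only [map_zero] at hc0
    have hβ : β < 0 := by nlinarith [hf0 0, hg0 0]
    have hβne : β ≠ 0 := ne_of_lt hβ
    have hβinv : β⁻¹ ≤ 0 := inv_nonpos.2 hβ.le
    -- key inequality (i): L(x,0) + u x * β ≤ s
    have hkey1 : ∀ x : X, L (x, 0) + u x * β ≤ s := by
      intro x
      by_contra hcon
      push_neg at hcon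
      set D : ℝ := L (x, 0) + u x * β - s with hD
      have hDpos : 0 < D := by linarith
      set δ : ℝ := D / (2 * (-β)) with hδ
      have hδpos : 0 < δ := div_pos hDpos (by linarith)
      have hmem : ((x, u x + δ) : X × ℝ) ∈ {p : X × ℝ | p.1 ∈ univ ∧ u p.1 < p.2} :=
        ⟨mem_univ _, show u x < u x + δ by linarith⟩
      have h3 := hA _ hmem
      rw [hL] at h3
      have hδβ : δ * β = -(D / 2) := by
        rw [hδ]
        field_simp
      linarith [h3, hδβ]
    -- key inequality (ii): s ≤ L(x,0) - g x * β
    have hkey2 : ∀ x : X, s ≤ L (x, 0) + (-g x) * β := by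
      intro x
      have hmem : ((x, -g x) : X × ℝ) ∈ {p : X × ℝ | p.1 ∈ univ ∧ p.2 ≤ -g p.1} :=
        ⟨mem_univ _, le_refl _⟩
      have := hB _ hmem
      rwa [hL] at this
    -- define ψ
    set ψ : X →L[ℝ] ℝ := β⁻¹ • (L.comp (ContinuousLinearMap.inl ℝ X ℝ)) with hψdef
    have hψx : ∀ x : X, ψ x = β⁻¹ * L (x, 0) := by
      intro x
      simp [hψdef]
    -- pointwise bounds
    have hbf : ∀ x : X, (φ - ψ) x - f x ≤ c - s * β⁻¹ := by
      intro x
      have h := hkey1 x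
      have h' := mul_le_mul_of_nonpos_right h hβinv
      have hexp : (L (x, 0) + u x * β) * β⁻¹ = L (x, 0) * β⁻¹ + u x := by
        field_simp
      rw [hexp] at h'
      have hux : u x = f x - φ x + c := rfl
      have : (φ - ψ) x = φ x - β⁻¹ * L (x, 0) := by
        rw [ContinuousLinearMap.sub_apply, hψx]
      rw [this]
      nlinarith [h']
    have hbg : ∀ x : X, ψ x - g x ≤ s * β⁻¹ := by
      intro x
      have h := hkey2 x
      have h' := mul_le_mul_of_nonpos_right h hβinv
      have hexp : (L (x, 0) + (-g x) * β) * β⁻¹ = L (x, 0) * β⁻¹ - g x := by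
        field_simp
        ring
      rw [hexp] at h'
      rw [hψx]
      nlinarith [h']
    -- conclude
    have hFf : fenchelConj f (φ - ψ) ≤ ((c - s * β⁻¹ : ℝ) : EReal) :=
      iSup_le fun x => EReal.coe_le_coe_iff.2 (hbf x)
    have hFg : fenchelConj g ψ ≤ ((s * β⁻¹ : ℝ) : EReal) :=
      iSup_le fun x => EReal.coe_le_coe_iff.2 (hbg x)
    calc (⨅ ψ' : X →L[ℝ] ℝ, fenchelConj f (φ - ψ') + fenchelConj g ψ')
        ≤ fenchelConj f (φ - ψ) + fenchelConj g ψ := iInf_le _ ψ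
      _ ≤ ((c - s * β⁻¹ : ℝ) : EReal) + ((s * β⁻¹ : ℝ) : EReal) := add_le_add hFf hFg
      _ = (c : EReal) := by rw [← EReal.coe_add]; norm_num
      _ = fenchelConj (fun x => f x + g x) φ := hFc.symm
end

section
/- Let X be a Banach space admitting an equivalent strictly convex norm. Then the set of strictly convex bodies in C₀₀(X) contains a dense F_σ subset of C₀(X) in the Hausdorff metric. -/
open Set Filter Metric Topology

/-- The collection of convex bodies of `X`. -/
def ConvexBodies (X : Type*) [NormedAddCommGroup X] [NormedSpace ℝ X] : Set (Set X) :=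
  {B | B.Nonempty ∧ Bornology.IsBounded B ∧ IsClosed B ∧ Convex ℝ B ∧
    (interior B).Nonempty}

/-- A convex body is strictly convex if every boundary point is an extreme point. -/
def IsStrictlyConvexBody {X : Type*} [NormedAddCommGroup X] [NormedSpace ℝ X]
    (B : Set X) : Prop :=
  ∀ x ∈ frontier B, x ∈ Set.extremePoints ℝ B

/-- `p` is an equivalent strictly convex norm on `X`: a definite, absolutely homogeneous,
subadditive functional equivalent to the original norm whose closed unit ball is a
strictly convex body. -/
def IsEquivStrictlyConvexNorm {X : Type*} [NormedAddCommGroup X] [NormedSpace ℝ X]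
    (p : X → ℝ) : Prop :=
  (∀ x, p x = 0 ↔ x = 0) ∧ (∀ (a : ℝ) (x : X), p (a • x) = |a| * p x) ∧
    (∀ x y, p (x + y) ≤ p x + p y) ∧
    (∃ a b : ℝ, 0 < a ∧ 0 < b ∧ ∀ x, a * ‖x‖ ≤ p x ∧ p x ≤ b * ‖x‖) ∧
    IsStrictlyConvexBody {z : X | p z ≤ 1}


/-!
Fix an equivalent strictly convex norm `p` and call `D` rounded with margin `c > 0` when
`gauge D - c • p` is still subadditive. A rounded body is strictly convex: along a segment in
its boundary the gauge is affine, so `p` would be additive there, which the strict convexity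
of `p` forbids unless the segment is a point. For bodies containing a fixed ball, Hausdorff
convergence gives pointwise convergence of gauges, so the rounded bodies between the balls of
radii `1/n` and `n`, with margin `1/n`, form a closed class; their union over `n` is the
`F_σ` set. It is dense: fatten a body `B` to `K = cthickening δ B`, which has `0` in its
interior, and take the body with gauge `gauge K + c • p`, which is rounded with margin `c`
and within `O(c)` of `K`.
-/

section Sublinear

variable {E : Type*} [AddCommGroup E] [Module ℝ E]

structure IsSublinear (q : E → ℝ) : Prop where
  nonneg : ∀ x, 0 ≤ q x
  map_smul_of_nonneg : ∀ {t : ℝ}, 0 ≤ t → ∀ x, q (t • x) = t * q x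
  map_add_le : ∀ x y, q (x + y) ≤ q x + q y

namespace IsSublinear

variable {q q' : E → ℝ}

theorem add (hq : IsSublinear q) (hq' : IsSublinear q') : IsSublinear (q + q') where
  nonneg x := add_nonneg (hq.nonneg x) (hq'.nonneg x)
  map_smul_of_nonneg ht x := by
    simp only [Pi.add_apply, hq.map_smul_of_nonneg ht, hq'.map_smul_of_nonneg ht, mul_add]
  map_add_le x y := by
    simp only [Pi.add_apply]
    linarith [hq.map_add_le x y, hq'.map_add_le x y]

theorem const_smul (hq : IsSublinear q) {c : ℝ} (hc : 0 ≤ c) : IsSublinear (c • q) where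
  nonneg x := mul_nonneg hc (hq.nonneg x)
  map_smul_of_nonneg ht x := by
    simp only [Pi.smul_apply, smul_eq_mul, hq.map_smul_of_nonneg ht]
    ring
  map_add_le x y := by
    simp only [Pi.smul_apply, smul_eq_mul, ← mul_add]
    exact mul_le_mul_of_nonneg_left (hq.map_add_le x y) hc

theorem convex_setOf_le_one (hq : IsSublinear q) : Convex ℝ {z | q z ≤ 1} := by
  intro x hx y hy a b ha hb hab
  calc q (a • x + b • y) ≤ a * q x + b * q y := by
        rw [← hq.map_smul_of_nonneg ha, ← hq.map_smul_of_nonneg hb]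
        exact hq.map_add_le _ _
    _ ≤ a * 1 + b * 1 := by gcongr <;> assumption
    _ = 1 := by rw [mul_one, mul_one, hab]

theorem gauge_setOf_le_one (hq : IsSublinear q) : gauge {z | q z ≤ 1} = q := by
  ext x
  have hmem : ∀ {t : ℝ}, 0 < t → (t⁻¹ • x ∈ {z | q z ≤ 1} ↔ q x ≤ t) := fun ht => by
    rw [mem_ofPred_eq, hq.map_smul_of_nonneg (inv_nonneg.2 ht.le), inv_mul_le_one₀ ht]
  have hq₀ := hq.nonneg x
  rw [gauge_def']
  refine le_antisymm (le_of_forall_gt_imp_ge_of_dense fun t ht => ?_)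
    (le_csInf ?_ fun t ht => (hmem ht.1).1 ht.2)
  · have ht₀ : 0 < t := hq₀.trans_lt ht
    exact csInf_le ⟨0, fun s hs => hs.1.le⟩ ⟨ht₀, (hmem ht₀).2 ht.le⟩
  · have h₁ : 0 < q x + 1 := by linarith
    exact ⟨q x + 1, h₁, (hmem h₁).2 (lt_add_one _).le⟩

end IsSublinear

theorem isSublinear_gauge {s : Set E} (hs : Convex ℝ s) (hs₀ : Absorbent ℝ s) :
    IsSublinear (gauge s) where
  nonneg := gauge_nonneg
  map_smul_of_nonneg ht x := by rw [gauge_smul_of_nonneg ht, smul_eq_mul]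
  map_add_le := gauge_add_le hs hs₀

end Sublinear

section HausdorffDistance

variable {α : Type*} [PseudoMetricSpace α]

theorem subset_thickening_of_hausdorffDist_lt {s t : Set α} {ε : ℝ}
    (hfin : hausdorffEDist s t ≠ ⊤) (h : hausdorffDist s t < ε) : s ⊆ thickening ε t :=
  fun _ hx =>
    let ⟨y, hy, hxy⟩ := exists_dist_lt_of_hausdorffDist_lt hx h hfin
    mem_thickening_iff.2 ⟨y, hy, hxy⟩

theorem hausdorffDist_cthickening_le {s : Set α} {δ : ℝ} (hδ : 0 ≤ δ) :
    hausdorffDist s (cthickening δ s) ≤ δ :=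
  hausdorffDist_le_of_infDist hδ
    (fun _ hx => (infDist_zero_of_mem (self_subset_cthickening s hx)).trans_le hδ)
    fun _ hx => ENNReal.toReal_le_of_le_ofReal hδ (mem_cthickening_iff.1 hx)

theorem subset_closure_of_hausdorffDist_lt {s t : ℕ → Set α} {u v : Set α} {ε : ℕ → ℝ}
    (hfin : ∀ k, hausdorffEDist (s k) (t k) ≠ ⊤) (hdist : ∀ k, hausdorffDist (s k) (t k) < ε k)
    (hε : Tendsto ε atTop (𝓝 0)) (hu : ∀ k, u ⊆ s k) (hv : ∀ k, t k ⊆ v) : u ⊆ closure v := by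
  intro x hx
  refine Metric.mem_closure_iff.2 fun η hη => ?_
  obtain ⟨k, hk⟩ := (hε.eventually (gt_mem_nhds hη)).exists
  obtain ⟨y, hy, hxy⟩ := exists_dist_lt_of_hausdorffDist_lt (hu k hx) ((hdist k).trans hk) (hfin k)
  exact ⟨y, hv k hy, hxy⟩

end HausdorffDistance

section ConvexBodies

open Pointwise

variable {X : Type*} [NormedAddCommGroup X] [NormedSpace ℝ X]

theorem gauge_le_mul_gauge_of_subset_thickening {A B : Set X} {r ε : ℝ} (hr : 0 < r)
    (hε : 0 ≤ ε) (hB : Convex ℝ B) (hBr : closedBall 0 r ⊆ B) (hA : Absorbent ℝ A)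
    (hAB : A ⊆ thickening ε B) (x : X) : gauge B x ≤ (1 + ε / r) * gauge A x := by
  have hε' : 0 ≤ ε / r := div_nonneg hε hr.le
  have hball : ball (0 : X) ε ⊆ (ε / r) • B := by
    calc ball (0 : X) ε ⊆ closedBall 0 ε := ball_subset_closedBall
      _ = (ε / r) • closedBall (0 : X) r := by
        rw [_root_.smul_closedBall _ _ hr.le, smul_zero, Real.norm_of_nonneg hε',
          div_mul_cancel₀ _ hr.ne']
      _ ⊆ (ε / r) • B := smul_set_mono hBr
  have hsub : A ⊆ (1 + ε / r) • B := by
    calc A ⊆ B + ball 0 ε := (add_ball_zero ε B).symm ▸ hAB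
      _ ⊆ (1 : ℝ) • B + (ε / r) • B := by rw [one_smul]; exact add_subset_add_left hball
      _ = (1 + ε / r) • B := (hB.add_smul zero_le_one hε').symm
  have h := gauge_mono hA hsub x
  rw [gauge_smul_left_of_nonneg (by positivity), Pi.smul_apply, smul_eq_mul,
    inv_mul_le_iff₀ (by positivity)] at h
  exact h

theorem tendsto_gauge_of_hausdorffDist_lt {A : ℕ → Set X} {B : Set X} {ε : ℕ → ℝ} {r : ℝ}
    (hr : 0 < r) (hA : ∀ k, Convex ℝ (A k)) (hAr : ∀ k, closedBall 0 r ⊆ A k) (hB : Convex ℝ B)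
    (hBr : closedBall 0 r ⊆ B) (hfin : ∀ k, hausdorffEDist B (A k) ≠ ⊤)
    (hdist : ∀ k, hausdorffDist B (A k) < ε k) (hε : Tendsto ε atTop (𝓝 0)) (x : X) :
    Tendsto (fun k => gauge (A k) x) atTop (𝓝 (gauge B x)) := by
  have habs : ∀ {s : Set X}, closedBall 0 r ⊆ s → Absorbent ℝ s := fun h =>
    absorbent_nhds_zero (mem_of_superset (closedBall_mem_nhds 0 hr) h)
  have hε₀ : ∀ k, 0 ≤ ε k := fun k => hausdorffDist_nonneg.trans (hdist k).le
  have hlim : Tendsto (fun k => 1 + ε k / r) atTop (𝓝 1) := by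
    simpa using (hε.div_const r).const_add 1
  have hupper : ∀ k, gauge (A k) x ≤ (1 + ε k / r) * gauge B x := fun k =>
    gauge_le_mul_gauge_of_subset_thickening hr (hε₀ k) (hA k) (hAr k) (habs hBr)
      (subset_thickening_of_hausdorffDist_lt (hfin k) (hdist k)) x
  have hlower : ∀ k, (1 + ε k / r)⁻¹ * gauge B x ≤ gauge (A k) x := fun k => by
    rw [inv_mul_le_iff₀ (by linarith [div_nonneg (hε₀ k) hr.le])]
    exact gauge_le_mul_gauge_of_subset_thickening hr (hε₀ k) hB hBr (habs (hAr k))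
      (subset_thickening_of_hausdorffDist_lt (hausdorffEDist_comm.trans_ne (hfin k))
        (hausdorffDist_comm.trans_lt (hdist k))) x
  refine tendsto_of_tendsto_of_tendsto_of_le_of_le ?_ ?_ hlower hupper
  · simpa using (hlim.inv₀ one_ne_zero).mul_const (gauge B x)
  · simpa using hlim.mul_const (gauge B x)

namespace IsEquivStrictlyConvexNorm

variable {p : X → ℝ} {x y : X}

theorem isSublinear (hp : IsEquivStrictlyConvexNorm p) : IsSublinear p := by
  obtain ⟨-, hsmul, hadd, ⟨a, _, ha, -, hbound⟩, -⟩ := hp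
  exact
    { nonneg := fun x => (mul_nonneg ha.le (norm_nonneg x)).trans (hbound x).1
      map_smul_of_nonneg := fun ht x => by rw [hsmul, abs_of_nonneg ht]
      map_add_le := hadd }

theorem exists_le_mul_norm (hp : IsEquivStrictlyConvexNorm p) :
    ∃ β, 0 < β ∧ ∀ x, p x ≤ β * ‖x‖ :=
  let ⟨_, β, _, hβ, hbound⟩ := hp.2.2.2.1
  ⟨β, hβ, fun x => (hbound x).2⟩

theorem map_zero (hp : IsEquivStrictlyConvexNorm p) : p 0 = 0 :=
  (hp.1 0).2 rfl

theorem pos (hp : IsEquivStrictlyConvexNorm p) (hx : x ≠ 0) : 0 < p x :=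
  (hp.isSublinear.nonneg x).lt_of_ne fun h => hx ((hp.1 x).1 h.symm)

theorem continuous (hp : IsEquivStrictlyConvexNorm p) : Continuous p := by
  obtain ⟨β, hβ, hle⟩ := hp.exists_le_mul_norm
  refine (LipschitzWith.of_le_add_mul ⟨β, hβ.le⟩ fun x y => ?_).continuous
  calc p x = p (y + (x - y)) := by rw [add_sub_cancel]
    _ ≤ p y + β * ‖x - y‖ := (hp.isSublinear.map_add_le _ _).trans (by gcongr; exact hle _)
    _ = p y + β * dist x y := by rw [dist_eq_norm]

theorem setOf_le_one_mem_nhds (hp : IsEquivStrictlyConvexNorm p) : {z | p z ≤ 1} ∈ 𝓝 (0 : X) :=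
  hp.continuous.continuousAt.preimage_mem_nhds (by rw [hp.map_zero]; exact Iic_mem_nhds one_pos)

theorem sameRay_of_map_add (hp : IsEquivStrictlyConvexNorm p) (h : p (x + y) = p x + p y) :
    SameRay ℝ x y := by
  rcases eq_or_ne x 0 with rfl | hx
  · exact SameRay.zero_left y
  rcases eq_or_ne y 0 with rfl | hy
  · exact SameRay.zero_right x
  have hsub := hp.isSublinear
  have hunit : ∀ {z : X}, z ≠ 0 → p ((p z)⁻¹ • z) = 1 := fun hz => by
    rw [hsub.map_smul_of_nonneg (inv_nonneg.2 (hp.pos hz).le), inv_mul_cancel₀ (hp.pos hz).ne']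
  have hpx := hp.pos hx
  have hpy := hp.pos hy
  have hpxy : 0 < p (x + y) := h ▸ add_pos hpx hpy
  have hw : (p (x + y))⁻¹ • (x + y) ∈ frontier {z | p z ≤ 1} := by
    rw [← gauge_eq_one_iff_mem_frontier hsub.convex_setOf_le_one hp.setOf_le_one_mem_nhds,
      hsub.gauge_setOf_le_one]
    exact hunit fun h0 => hpxy.ne' (by rw [h0, hp.map_zero])
  have hseg : (p (x + y))⁻¹ • (x + y) ∈ openSegment ℝ ((p x)⁻¹ • x) ((p y)⁻¹ • y) := by
    refine ⟨p x / p (x + y), p y / p (x + y), by positivity, by positivity, ?_, ?_⟩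
    · rw [← add_div, ← h, div_self hpxy.ne']
    · rw [smul_smul, smul_smul, smul_add]
      congr 2 <;> field_simp
  have hext : IsStrictlyConvexBody {z | p z ≤ 1} := hp.2.2.2.2
  obtain ⟨hu, hv⟩ := (mem_extremePoints.1 (hext _ hw)).2 _ (hunit hx).le _ (hunit hy).le hseg
  exact Or.inr (Or.inr ⟨_, _, inv_pos.2 hpx, inv_pos.2 hpy, hu.trans hv.symm⟩)

end IsEquivStrictlyConvexNorm

structure IsRoundedBody (p : X → ℝ) (c r R : ℝ) (D : Set X) : Prop where
  isClosed : IsClosed D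
  convex : Convex ℝ D
  closedBall_subset : closedBall 0 r ⊆ D
  subset_closedBall : D ⊆ closedBall 0 R
  gauge_sub_add_le : ∀ x y,
    gauge D (x + y) - c * p (x + y) ≤ gauge D x - c * p x + (gauge D y - c * p y)

namespace IsRoundedBody

variable {p : X → ℝ} {c r R : ℝ} {D : Set X}

theorem mono (hD : IsRoundedBody p c r R D) {r' R' : ℝ} (hr : r' ≤ r) (hR : R ≤ R') :
    IsRoundedBody p c r' R' D :=
  { hD with
    closedBall_subset := (closedBall_subset_closedBall hr).trans hD.closedBall_subset
    subset_closedBall := hD.subset_closedBall.trans (closedBall_subset_closedBall hR) }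

theorem mem_nhds_zero (hD : IsRoundedBody p c r R D) (hr : 0 < r) : D ∈ 𝓝 (0 : X) :=
  mem_of_superset (closedBall_mem_nhds 0 hr) hD.closedBall_subset

theorem nonempty (hD : IsRoundedBody p c r R D) (hr : 0 < r) : D.Nonempty :=
  ⟨0, mem_of_mem_nhds (hD.mem_nhds_zero hr)⟩

theorem isBounded (hD : IsRoundedBody p c r R D) : Bornology.IsBounded D :=
  isBounded_closedBall.subset hD.subset_closedBall

theorem zero_mem_interior (hD : IsRoundedBody p c r R D) (hr : 0 < r) : (0 : X) ∈ interior D :=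
  mem_interior_iff_mem_nhds.2 (hD.mem_nhds_zero hr)

theorem mem_convexBodies (hD : IsRoundedBody p c r R D) (hr : 0 < r) : D ∈ ConvexBodies X :=
  ⟨hD.nonempty hr, hD.isBounded, hD.isClosed, hD.convex, ⟨0, hD.zero_mem_interior hr⟩⟩

theorem isStrictlyConvexBody (hD : IsRoundedBody p c r R D) (hp : IsEquivStrictlyConvexNorm p)
    (hc : 0 < c) (hr : 0 < r) : IsStrictlyConvexBody D := by
  intro x hx
  have hD₀ := hD.mem_nhds_zero hr
  have hg := isSublinear_gauge hD.convex (absorbent_nhds_zero hD₀)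
  have hgx : gauge D x = 1 := (gauge_eq_one_iff_mem_frontier hD.convex hD₀).2 hx
  refine mem_extremePoints.2 ⟨hD.isClosed.frontier_subset hx, ?_⟩
  rintro x₁ hx₁ x₂ hx₂ ⟨a, b, ha, hb, hab, rfl⟩
  have hsplit := hg.map_add_le (a • x₁) (b • x₂)
  rw [hgx, hg.map_smul_of_nonneg ha.le, hg.map_smul_of_nonneg hb.le] at hsplit
  have hg₁ : gauge D x₁ = 1 := by nlinarith [gauge_le_one_of_mem hx₁, gauge_le_one_of_mem hx₂]
  have hg₂ : gauge D x₂ = 1 := by nlinarith [gauge_le_one_of_mem hx₁, gauge_le_one_of_mem hx₂]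
  have hne : ∀ {z : X}, gauge D z = 1 → z ≠ 0 := fun hz h0 => by
    rw [h0, gauge_zero] at hz; exact zero_ne_one hz
  -- the margin `c • p` makes `p` additive on the two summands, so they point the same way
  have hadd : p (a • x₁ + b • x₂) = p (a • x₁) + p (b • x₂) := by
    have h := hD.gauge_sub_add_le (a • x₁) (b • x₂)
    rw [hgx, hg.map_smul_of_nonneg ha.le, hg.map_smul_of_nonneg hb.le, hg₁, hg₂] at h
    refine le_antisymm (hp.isSublinear.map_add_le _ _) (le_of_mul_le_mul_left ?_ hc)
    linarith
  have hray : SameRay ℝ x₁ x₂ := by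
    have h := ((hp.sameRay_of_map_add hadd).pos_smul_left (inv_pos.2 ha)).pos_smul_right
      (inv_pos.2 hb)
    rwa [inv_smul_smul₀ ha.ne', inv_smul_smul₀ hb.ne'] at h
  obtain ⟨t, ht, rfl⟩ := hray.exists_pos_left (hne hg₁) (hne hg₂)
  obtain rfl : t = 1 := by rwa [hg.map_smul_of_nonneg ht.le, hg₁, mul_one] at hg₂
  rw [one_smul, ← add_smul, hab, one_smul]
  exact ⟨rfl, rfl⟩

theorem of_forall_hausdorffDist_lt (hr : 0 < r) {B : Set X} (hB : B ∈ ConvexBodies X)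
    (h : ∀ ε > (0 : ℝ), ∃ D, IsRoundedBody p c r R D ∧ hausdorffDist B D < ε) :
    IsRoundedBody p c r R B := by
  obtain ⟨hBne, hBb, hBcl, hBcv, -⟩ := hB
  choose D hD hdist using fun k : ℕ => h (1 / ((k : ℝ) + 1)) Nat.one_div_pos_of_nat
  have hε := tendsto_one_div_add_atTop_nhds_zero_nat (𝕜 := ℝ)
  have hfin : ∀ k, hausdorffEDist B (D k) ≠ ⊤ := fun k =>
    hausdorffEDist_ne_top_of_nonempty_of_bounded hBne ((hD k).nonempty hr) hBb (hD k).isBounded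
  have hBr : closedBall 0 r ⊆ B :=
    (subset_closure_of_hausdorffDist_lt (fun k => hausdorffEDist_comm.trans_ne (hfin k))
      (fun k => hausdorffDist_comm.trans_lt (hdist k)) hε (fun k => (hD k).closedBall_subset)
      fun _ => subset_rfl).trans hBcl.closure_subset
  have hBR : B ⊆ closedBall 0 R :=
    (subset_closure_of_hausdorffDist_lt hfin hdist hε (fun _ => subset_rfl)
      fun k => (hD k).subset_closedBall).trans isClosed_closedBall.closure_subset
  have hg (x : X) := tendsto_gauge_of_hausdorffDist_lt hr (fun k => (hD k).convex)
    (fun k => (hD k).closedBall_subset) hBcv hBr hfin hdist hε x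
  refine ⟨hBcl, hBcv, hBr, hBR, fun x y => ?_⟩
  exact le_of_tendsto_of_tendsto' ((hg (x + y)).sub_const _)
    (((hg x).sub_const _).add ((hg y).sub_const _)) fun k => (hD k).gauge_sub_add_le x y

end IsRoundedBody

def rounding (p : X → ℝ) (c : ℝ) (K : Set X) : Set X :=
  {z | (gauge K + c • p) z ≤ 1}

section Rounding

variable {p : X → ℝ} {c : ℝ} {K : Set X}

theorem isSublinear_gauge_add_smul (hp : IsSublinear p) (hc : 0 ≤ c) (hK : Convex ℝ K)
    (hK₀ : K ∈ 𝓝 (0 : X)) : IsSublinear (gauge K + c • p) :=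
  (isSublinear_gauge hK (absorbent_nhds_zero hK₀)).add (hp.const_smul hc)

theorem gauge_rounding (hp : IsSublinear p) (hc : 0 ≤ c) (hK : Convex ℝ K)
    (hK₀ : K ∈ 𝓝 (0 : X)) : gauge (rounding p c K) = gauge K + c • p :=
  (isSublinear_gauge_add_smul hp hc hK hK₀).gauge_setOf_le_one

theorem rounding_subset (hp : IsSublinear p) (hc : 0 ≤ c) (hK : Convex ℝ K)
    (hK₀ : K ∈ 𝓝 (0 : X)) (hKcl : IsClosed K) : rounding p c K ⊆ K := fun z hz => by
  have h : gauge K z ≤ 1 := le_of_add_le_of_nonneg_left hz (mul_nonneg hc (hp.nonneg z))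
  rw [← hKcl.closure_eq]
  exact (gauge_le_one_iff_mem_closure hK hK₀).1 h

theorem closedBall_subset_rounding {δ β : ℝ} (hc : 0 ≤ c) (hδ : 0 < δ) (hβ : 0 ≤ β)
    (hpβ : ∀ x, p x ≤ β * ‖x‖) (hKδ : closedBall 0 δ ⊆ K) :
    closedBall 0 (δ⁻¹ + c * β)⁻¹ ⊆ rounding p c K := fun z hz => by
  have hgauge : gauge K z ≤ δ⁻¹ * ‖z‖ := by
    rw [inv_mul_eq_div, le_div_iff₀' hδ]
    exact mul_gauge_le_norm (ball_subset_closedBall.trans hKδ)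
  have hz' : (δ⁻¹ + c * β) * ‖z‖ ≤ 1 :=
    calc (δ⁻¹ + c * β) * ‖z‖ ≤ (δ⁻¹ + c * β) * (δ⁻¹ + c * β)⁻¹ := by
          gcongr; exact mem_closedBall_zero_iff.1 hz
      _ = 1 := mul_inv_cancel₀ (by positivity)
  show gauge K z + c * p z ≤ 1
  nlinarith [hpβ z]

theorem hausdorffDist_rounding_le {β R : ℝ} (hp : IsSublinear p) (hc : 0 ≤ c) (hβ : 0 ≤ β)
    (hpβ : ∀ x, p x ≤ β * ‖x‖) (hK : Convex ℝ K) (hK₀ : K ∈ 𝓝 (0 : X)) (hKcl : IsClosed K)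
    (hKR : K ⊆ closedBall 0 R) : hausdorffDist K (rounding p c K) ≤ c * β * R ^ 2 := by
  have hq := isSublinear_gauge_add_smul hp hc hK hK₀
  refine hausdorffDist_le_of_mem_dist (by positivity) (fun x hx => ?_)
    fun x hx => ⟨x, rounding_subset hp hc hK hK₀ hKcl hx, by rw [dist_self]; positivity⟩
  have hpx := hp.nonneg x
  have h1t : 1 ≤ 1 + c * p x := le_add_of_nonneg_right (mul_nonneg hc hpx)
  have ht : 0 < 1 + c * p x := by positivity
  have hxR : ‖x‖ ≤ R := mem_closedBall_zero_iff.1 (hKR hx)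
  refine ⟨(1 + c * p x)⁻¹ • x, ?_, ?_⟩
  · show (gauge K + c • p) _ ≤ 1
    rw [hq.map_smul_of_nonneg (inv_pos.2 ht).le, inv_mul_le_one₀ ht, Pi.add_apply,
      Pi.smul_apply, smul_eq_mul, add_le_add_iff_right]
    exact gauge_le_one_of_mem hx
  · have hcoef : 1 - (1 + c * p x)⁻¹ ≤ c * p x := by
      rw [sub_le_iff_le_add, ← sub_le_iff_le_add', inv_eq_one_div, le_div_iff₀ ht]
      nlinarith [mul_nonneg hc hpx]
    calc dist x ((1 + c * p x)⁻¹ • x) = (1 - (1 + c * p x)⁻¹) * ‖x‖ := by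
          rw [dist_eq_norm, ← one_smul ℝ x, smul_smul, mul_one, ← sub_smul, norm_smul, one_smul,
            Real.norm_of_nonneg (sub_nonneg.2 (inv_le_one_of_one_le₀ h1t))]
      _ ≤ c * (β * R) * R :=
          mul_le_mul (hcoef.trans (by gcongr; exact (hpβ x).trans (by gcongr))) hxR
            (norm_nonneg x) (mul_nonneg hc (mul_nonneg hβ ((norm_nonneg x).trans hxR)))
      _ = c * β * R ^ 2 := by ring

theorem isRoundedBody_rounding {δ β R : ℝ} (hp : IsSublinear p)
    (hpc : Continuous p) (hc : 0 ≤ c) (hβ : 0 ≤ β) (hpβ : ∀ x, p x ≤ β * ‖x‖) (hδ : 0 < δ)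
    (hK : Convex ℝ K) (hKcl : IsClosed K) (hKδ : closedBall 0 δ ⊆ K)
    (hKR : K ⊆ closedBall 0 R) : IsRoundedBody p c (δ⁻¹ + c * β)⁻¹ R (rounding p c K) := by
  have hK₀ : K ∈ 𝓝 (0 : X) := mem_of_superset (closedBall_mem_nhds 0 hδ) hKδ
  refine
    { isClosed := isClosed_le ((continuous_gauge hK hK₀).add (hpc.const_smul c)) continuous_const
      convex := (isSublinear_gauge_add_smul hp hc hK hK₀).convex_setOf_le_one
      closedBall_subset := closedBall_subset_rounding hc hδ hβ hpβ hKδ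
      subset_closedBall := (rounding_subset hp hc hK hK₀ hKcl).trans hKR
      gauge_sub_add_le := fun x y => ?_ }
  simp only [gauge_rounding hp hc hK hK₀, Pi.add_apply, Pi.smul_apply, smul_eq_mul,
    add_sub_cancel_right]
  exact gauge_add_le hK (absorbent_nhds_zero hK₀) x y

end Rounding

theorem exists_isRoundedBody_hausdorffDist_lt {p : X → ℝ} (hp : IsEquivStrictlyConvexNorm p)
    {B : Set X} (hB : B ∈ ConvexBodies X) (h₀ : (0 : X) ∈ B) {ε : ℝ} (hε : 0 < ε) :
    ∃ n : ℕ, ∃ D, IsRoundedBody p ((n : ℝ) + 1)⁻¹ ((n : ℝ) + 1)⁻¹ ((n : ℝ) + 1) D ∧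
      hausdorffDist B D < ε := by
  obtain ⟨hBne, hBb, -, hBcv, -⟩ := hB
  obtain ⟨β, hβ, hpβ⟩ := hp.exists_le_mul_norm
  have hδ : 0 < ε / 2 := half_pos hε
  set K := cthickening (ε / 2) B
  have hKb : Bornology.IsBounded K := hBb.cthickening
  obtain ⟨R, hKR⟩ := (isBounded_iff_subset_closedBall 0).1 hKb
  have hKδ : closedBall 0 (ε / 2) ⊆ K := closedBall_subset_cthickening h₀ _
  have hK₀ : K ∈ 𝓝 (0 : X) := mem_of_superset (closedBall_mem_nhds 0 hδ) hKδ
  have hlim : Tendsto (fun n : ℕ => (n : ℝ) + 1) atTop atTop :=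
    tendsto_atTop_add_const_right _ 1 tendsto_natCast_atTop_atTop
  have hsmall : ∀ᶠ n : ℕ in atTop, ((n : ℝ) + 1)⁻¹ * β * R ^ 2 < ε / 2 := by
    have h := ((tendsto_inv_atTop_zero.comp hlim).mul_const β).mul_const (R ^ 2)
    rw [zero_mul, zero_mul] at h
    exact h.eventually (gt_mem_nhds hδ)
  obtain ⟨n, hn₁, hn₂, hn₃⟩ :=
    ((hlim.eventually_ge_atTop ((ε / 2)⁻¹ + β)).and ((hlim.eventually_ge_atTop R).and hsmall)).exists
  set N := (n : ℝ) + 1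
  have hN : N⁻¹ ≤ 1 := inv_le_one_of_one_le₀ (le_add_of_nonneg_left n.cast_nonneg)
  have hr : N⁻¹ ≤ ((ε / 2)⁻¹ + N⁻¹ * β)⁻¹ :=
    inv_anti₀ (by positivity) ((add_le_add_right (mul_le_of_le_one_left hβ.le hN) _).trans hn₁)
  refine ⟨n, _, (isRoundedBody_rounding hp.isSublinear hp.continuous (by positivity) hβ.le hpβ
    hδ (hBcv.cthickening _) isClosed_cthickening hKδ hKR).mono hr hn₂, ?_⟩
  calc hausdorffDist B (rounding p N⁻¹ K)
      ≤ hausdorffDist B K + hausdorffDist K (rounding p N⁻¹ K) :=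
        hausdorffDist_triangle (hausdorffEDist_ne_top_of_nonempty_of_bounded hBne
          ⟨0, hKδ (mem_closedBall_self hδ.le)⟩ hBb hKb)
    _ < ε / 2 + ε / 2 := add_lt_add_of_le_of_lt (hausdorffDist_cthickening_le hδ.le)
        ((hausdorffDist_rounding_le hp.isSublinear (by positivity) hβ.le hpβ (hBcv.cthickening _)
          hK₀ isClosed_cthickening hKR).trans_lt hn₃)
    _ = ε := add_halves ε

end ConvexBodies

theorem strictly_convex_bodies_contain_dense_Fsigma_general
    {X : Type*} [NormedAddCommGroup X] [NormedSpace ℝ X]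
    (hnorm : ∃ p : X → ℝ, IsEquivStrictlyConvexNorm p) :
    ∃ S : Set (Set X),
      S ⊆ {B ∈ ConvexBodies X | (0 : X) ∈ interior B ∧ IsStrictlyConvexBody B} ∧
      (∃ F : ℕ → Set (Set X), S = ⋃ n, F n ∧
        ∀ n, F n ⊆ {B ∈ ConvexBodies X | (0 : X) ∈ B} ∧
          ∀ B ∈ {B ∈ ConvexBodies X | (0 : X) ∈ B},
            (∀ ε > (0 : ℝ), ∃ D ∈ F n, Metric.hausdorffDist B D < ε) → B ∈ F n) ∧
      ∀ B ∈ {B ∈ ConvexBodies X | (0 : X) ∈ B}, ∀ ε > (0 : ℝ),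
        ∃ D ∈ S, Metric.hausdorffDist B D < ε := by
  obtain ⟨p, hp⟩ := hnorm
  let F : ℕ → Set (Set X) := fun n =>
    {D | IsRoundedBody p ((n : ℝ) + 1)⁻¹ ((n : ℝ) + 1)⁻¹ ((n : ℝ) + 1) D}
  have hr : ∀ n : ℕ, (0 : ℝ) < ((n : ℝ) + 1)⁻¹ := fun n => by positivity
  refine ⟨⋃ n, F n, iUnion_subset fun n D hD => ?_, ⟨F, rfl, fun n => ⟨fun D hD => ?_,
    fun B hB h => IsRoundedBody.of_forall_hausdorffDist_lt (hr n) hB.1 h⟩⟩, fun B hB ε hε => ?_⟩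
  · exact ⟨hD.mem_convexBodies (hr n), hD.zero_mem_interior (hr n),
      hD.isStrictlyConvexBody hp (hr n) (hr n)⟩
  · exact ⟨hD.mem_convexBodies (hr n), interior_subset (hD.zero_mem_interior (hr n))⟩
  · obtain ⟨n, D, hD, hBD⟩ := exists_isRoundedBody_hausdorffDist_lt hp hB.1 hB.2 hε
    exact ⟨D, mem_iUnion.2 ⟨n, hD⟩, hBD⟩

/-- If a Banach space `X` admits an equivalent strictly convex norm,
then the set of strictly convex bodies in `C₀₀(X)` contains a subset that is `F_σ`
(a countable union of sets closed in `C₀(X)` for the Hausdorff metric) and dense in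
`C₀(X)`. -/
theorem strictly_convex_bodies_contain_dense_Fsigma
    {X : Type*} [NormedAddCommGroup X] [NormedSpace ℝ X] [CompleteSpace X]
    (hnorm : ∃ p : X → ℝ, IsEquivStrictlyConvexNorm p) :
    ∃ S : Set (Set X),
      S ⊆ {B ∈ ConvexBodies X | (0 : X) ∈ interior B ∧ IsStrictlyConvexBody B} ∧
      (∃ F : ℕ → Set (Set X), S = ⋃ n, F n ∧
        ∀ n, F n ⊆ {B ∈ ConvexBodies X | (0 : X) ∈ B} ∧
          ∀ B ∈ {B ∈ ConvexBodies X | (0 : X) ∈ B},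
            (∀ ε > (0 : ℝ), ∃ D ∈ F n, Metric.hausdorffDist B D < ε) → B ∈ F n) ∧
      ∀ B ∈ {B ∈ ConvexBodies X | (0 : X) ∈ B}, ∀ ε > (0 : ℝ),
        ∃ D ∈ S, Metric.hausdorffDist B D < ε :=
  strictly_convex_bodies_contain_dense_Fsigma_general hnorm
end

section
/- For a Banach space X, the set of strictly convex bodies is dense in the set of all convex bodies (with the Hausdorff metric) if and only if X admits an equivalent strictly convex norm. -/
open Set Filter Metric Topology

/-!
If `K` is a strictly convex body with `0` in its interior, `(gauge K) ^ 2` is a strictly convex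
function, and the gauge of the symmetric body `K ∩ -K` is an equivalent strictly convex norm;
conversely the unit ball of such a norm is a strictly convex body. Given one such `K` and any body
`B` with `0` in its interior, the sublevel set `{gauge B + λ (gauge K) ^ 2 ≤ 1}` is strictly
convex, lies in `B` and, for small `λ > 0`, contains `t • B` for `t` close to `1`: it is
Hausdorff-close to `B`. Translations reduce everything to bodies with `0` in their interior.
-/

open scoped Pointwise

section StrictConvexFunctions

variable {E : Type*} [AddCommGroup E] [Module ℝ E] {s : Set E} {f : E → ℝ}

theorem StrictConvexOn.const_mul (hf : StrictConvexOn ℝ s f) {c : ℝ} (hc : 0 < c) :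
    StrictConvexOn ℝ s fun x => c * f x := by
  refine ⟨hf.1, fun x hx y hy hxy a b ha hb hab => ?_⟩
  have := hf.2 hx hy hxy ha hb hab
  simp only [smul_eq_mul] at this ⊢
  nlinarith

theorem StrictConvexOn.strictConvex_le [TopologicalSpace E] (hf : StrictConvexOn ℝ univ f)
    (hcont : Continuous f) (r : ℝ) : StrictConvex ℝ {x | f x ≤ r} := by
  intro x hx y hy hxy a b ha hb hab
  refine interior_mono (s := {x | f x < r}) (fun _ h => le_of_lt (α := ℝ) h) ?_
  rw [(isOpen_lt hcont continuous_const).interior_eq]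
  calc f (a • x + b • y) < a • f x + b • f y := hf.2 trivial trivial hxy ha hb hab
    _ ≤ a • r + b • r := by gcongr <;> assumption
    _ = r := by rw [← add_smul, hab, one_smul]

theorem convexOn_gauge_s16 (hc : Convex ℝ s) (ha : Absorbent ℝ s) : ConvexOn ℝ univ (gauge s) :=
  ⟨convex_univ, fun x _ y _ a b ha' hb' _ => (gauge_add_le hc ha _ _).trans_eq (by
    rw [gauge_smul_of_nonneg ha', gauge_smul_of_nonneg hb'])⟩

end StrictConvexFunctions

section Gauge

variable {E : Type*} [AddCommGroup E] [Module ℝ E] [TopologicalSpace E]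
  [IsTopologicalAddGroup E] [ContinuousSMul ℝ E] [T1Space E] {B K : Set E}

/-- Off the level sets of `gauge K` strictness comes from `t ↦ t ^ 2`; on a level set, from the
strict convexity of `K`. -/
theorem StrictConvex.strictConvexOn_gauge_sq_s16 (hK : StrictConvex ℝ K) (hKc : IsClosed K)
    (hK0 : K ∈ 𝓝 0) (hKb : Bornology.IsVonNBounded ℝ K) :
    StrictConvexOn ℝ univ fun x => gauge K x ^ 2 := by
  have habs : Absorbent ℝ K := absorbent_nhds_zero hK0
  refine ⟨convex_univ, fun x _ y _ hxy a b ha hb hab => ?_⟩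
  simp only [smul_eq_mul]
  have hsub : gauge K (a • x + b • y) ≤ a * gauge K x + b * gauge K y :=
    (convexOn_gauge_s16 hK.convex habs).2 trivial trivial ha.le hb.le hab
  rcases ne_or_eq (gauge K x) (gauge K y) with hne | heq
  · calc gauge K (a • x + b • y) ^ 2 ≤ (a * gauge K x + b * gauge K y) ^ 2 :=
          pow_le_pow_left₀ (gauge_nonneg _) hsub 2
      _ < a * gauge K x ^ 2 + b * gauge K y ^ 2 :=
          (strictConvexOn_pow le_rfl).2 (gauge_nonneg x) (gauge_nonneg y) hne ha hb hab
  set c := gauge K x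
  have hc : 0 < c := by
    refine (gauge_nonneg x).lt_of_ne fun h => hxy ?_
    rw [(gauge_eq_zero habs hKb).1 h.symm, (gauge_eq_zero habs hKb).1 (h.trans heq).symm]
  have hmem : ∀ z, gauge K z = c → c⁻¹ • z ∈ K := fun z hz => by
    rw [← hKc.closure_eq, ← gauge_le_one_iff_mem_closure hK.convex hK0,
      gauge_smul_of_nonneg (inv_nonneg.2 hc.le), hz, smul_eq_mul, inv_mul_cancel₀ hc.ne']
  have hint := hK (hmem x rfl) (hmem y heq.symm)
    ((smul_right_injective E (inv_ne_zero hc.ne')).ne hxy) ha hb hab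
  rw [smul_comm a, smul_comm b, ← smul_add, ← gauge_lt_one_iff_mem_interior hK.convex hK0,
    gauge_smul_of_nonneg (inv_nonneg.2 hc.le), smul_eq_mul, inv_mul_lt_one₀ hc] at hint
  calc gauge K (a • x + b • y) ^ 2 < c ^ 2 := pow_lt_pow_left₀ hint (gauge_nonneg _) two_ne_zero
    _ = a * c ^ 2 + b * gauge K y ^ 2 := by rw [← heq, ← add_mul, hab, one_mul]

theorem exists_strictConvex_smul_subset_subset (hBc : IsClosed B) (hB : Convex ℝ B)
    (hB0 : B ∈ 𝓝 0) (hBb : Bornology.IsVonNBounded ℝ B) (hK : StrictConvex ℝ K)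
    (hKc : IsClosed K) (hK0 : K ∈ 𝓝 0) (hKb : Bornology.IsVonNBounded ℝ K) {t : ℝ}
    (ht0 : 0 ≤ t) (ht1 : t < 1) :
    ∃ D, IsClosed D ∧ StrictConvex ℝ D ∧ D ∈ 𝓝 0 ∧ t • B ⊆ D ∧ D ⊆ B := by
  obtain ⟨r, hr, hBK⟩ := (hBb hK0).exists_pos
  have hgaugeK : ∀ y ∈ B, gauge K y ≤ r := fun y hy =>
    gauge_le_of_mem hr.le (hBK r (by rw [Real.norm_of_nonneg hr.le]) hy)
  set lam := (1 - t) / r ^ 2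
  have hlam : 0 < lam := div_pos (by linarith) (by positivity)
  set q := fun z => gauge B z + lam * gauge K z ^ 2
  have hq : Continuous q := by
    have := continuous_gauge hB hB0
    have := continuous_gauge hK.convex hK0
    fun_prop
  have hqsc : StrictConvexOn ℝ univ q :=
    (convexOn_gauge_s16 hB (absorbent_nhds_zero hB0)).add_strictConvexOn
      ((hK.strictConvexOn_gauge_sq_s16 hKc hK0 hKb).const_mul hlam)
  refine ⟨{z | q z ≤ 1}, isClosed_le hq continuous_const, hqsc.strictConvex_le hq 1, ?_, ?_, ?_⟩
  · refine mem_of_superset ((isOpen_lt hq continuous_const).mem_nhds ?_)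
      fun _ h => le_of_lt (α := ℝ) h
    simp [q, gauge_zero]
  · rintro _ ⟨y, hy, rfl⟩
    have h1 : gauge B y ≤ 1 := gauge_le_one_of_mem hy
    have h2 : gauge K y ^ 2 ≤ r ^ 2 := pow_le_pow_left₀ (gauge_nonneg y) (hgaugeK y hy) 2
    have ht2 : t ^ 2 ≤ 1 := by nlinarith
    show gauge B (t • y) + lam * gauge K (t • y) ^ 2 ≤ 1
    rw [gauge_smul_of_nonneg ht0, gauge_smul_of_nonneg ht0, smul_eq_mul, smul_eq_mul]
    calc t * gauge B y + lam * (t * gauge K y) ^ 2 ≤ t * 1 + lam * (1 * r ^ 2) := by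
          rw [mul_pow]; gcongr
      _ = 1 := by rw [one_mul, div_mul_cancel₀ _ (by positivity)]; ring
  · intro z hz
    rw [← hBc.closure_eq, ← gauge_le_one_iff_mem_closure hB hB0]
    have : 0 ≤ lam * gauge K z ^ 2 := by positivity
    exact (le_add_of_nonneg_right this).trans hz

end Gauge

theorem neg_vadd_mem_nhds_zero {G : Type*} [TopologicalSpace G] [AddGroup G]
    [IsTopologicalAddGroup G] {s : Set G} {x : G} (hx : x ∈ interior s) : -x +ᵥ s ∈ 𝓝 0 := by
  rw [← mem_interior_iff_mem_nhds, interior_vadd, mem_vadd_set_iff_neg_vadd_mem, neg_neg,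
    vadd_eq_add, add_zero]
  exact hx

theorem hausdorffDist_vadd {M α : Type*} [PseudoMetricSpace α] [VAdd M α] [IsIsometricVAdd M α]
    (c : M) (s t : Set α) : hausdorffDist (c +ᵥ s) (c +ᵥ t) = hausdorffDist s t := by
  simpa only [image_vadd] using hausdorffDist_image (isometry_vadd α c)

section ConvexBodies

variable {X : Type*} [NormedAddCommGroup X] [NormedSpace ℝ X] {B D K : Set X}

theorem IsStrictlyConvexBody.strictConvex (hK : IsStrictlyConvexBody K) (hKconv : Convex ℝ K) :
    StrictConvex ℝ K := by
  intro x hx y hy hxy a b ha hb hab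
  by_contra hint
  have hfr : a • x + b • y ∈ frontier K := ⟨subset_closure (hKconv hx hy ha.le hb.le hab), hint⟩
  obtain ⟨hxz, hyz⟩ := (mem_extremePoints.1 (hK _ hfr)).2 x hx y hy ⟨a, b, ha, hb, hab, rfl⟩
  exact hxy (hxz.trans hyz.symm)

theorem StrictConvex.isStrictlyConvexBody (hK : StrictConvex ℝ K) (hKc : IsClosed K) :
    IsStrictlyConvexBody K := by
  intro x hx
  refine ⟨hKc.frontier_subset hx, fun y hy z hz hseg => ?_⟩
  rcases eq_or_ne y z with rfl | hyz
  · rw [openSegment_same, mem_singleton_iff] at hseg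
    exact hseg.symm
  · obtain ⟨a, b, ha, hb, hab, rfl⟩ := hseg
    exact absurd (hK hy hz hyz ha hb hab) hx.2

theorem vadd_mem_convexBodies (hB : B ∈ ConvexBodies X) (x : X) : x +ᵥ B ∈ ConvexBodies X := by
  obtain ⟨hne, hb, hc, hconv, hint⟩ := hB
  exact ⟨hne.vadd_set, hb.vadd x, hc.vadd x, hconv.vadd x, by
    rw [interior_vadd]; exact hint.vadd_set⟩

theorem hausdorffDist_le_of_smul_subset_subset {t R : ℝ} (ht1 : t ≤ 1)
    (hR : 0 ≤ R) (hBR : B ⊆ closedBall 0 R) (htBD : t • B ⊆ D) (hDB : D ⊆ B) :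
    hausdorffDist B D ≤ (1 - t) * R := by
  have hr : 0 ≤ (1 - t) * R := mul_nonneg (by linarith) hR
  refine hausdorffDist_le_of_mem_dist hr
    (fun x hx => ⟨t • x, htBD (smul_mem_smul_set hx), ?_⟩) fun y hy => ⟨y, hDB hy, by simpa⟩
  rw [dist_eq_norm, show x - t • x = (1 - t) • x by module, norm_smul,
    Real.norm_of_nonneg (by linarith)]
  exact mul_le_mul_of_nonneg_left (mem_closedBall_zero_iff.1 (hBR hx)) (by linarith)

theorem closedBall_mem_convexBodies (x : X) {r : ℝ} (hr : 0 < r) :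
    closedBall x r ∈ ConvexBodies X :=
  ⟨nonempty_closedBall.2 hr.le, isBounded_closedBall, isClosed_closedBall, convex_closedBall x r,
    ⟨x, ball_subset_interior_closedBall (mem_ball_self hr)⟩⟩

theorem exists_pos_gauge_le_mul_norm (hB : B ∈ 𝓝 0) : ∃ b > 0, ∀ x, gauge B x ≤ b * ‖x‖ := by
  obtain ⟨r, hr, hball⟩ := Metric.mem_nhds_iff.1 hB
  refine ⟨r⁻¹, inv_pos.2 hr, fun x => ?_⟩
  calc gauge B x ≤ gauge (ball 0 r) x := gauge_mono (absorbent_ball_zero hr) hball x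
    _ = r⁻¹ * ‖x‖ := by rw [gauge_ball hr.le, div_eq_inv_mul]

theorem exists_pos_mul_norm_le_gauge (ha : Absorbent ℝ B) (hb : Bornology.IsBounded B) :
    ∃ a > 0, ∀ x, a * ‖x‖ ≤ gauge B x := by
  obtain ⟨R, hR, hBR⟩ := hb.subset_closedBall_lt 0 0
  refine ⟨R⁻¹, inv_pos.2 hR, fun x => ?_⟩
  rw [← div_eq_inv_mul]
  exact le_gauge_of_subset_closedBall ha hR.le hBR

theorem exists_isEquivStrictlyConvexNorm_of_strictConvex (hKc : IsClosed K)
    (hKb : Bornology.IsBounded K) (hK : StrictConvex ℝ K) (hK0 : K ∈ 𝓝 0) :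
    ∃ p : X → ℝ, IsEquivStrictlyConvexNorm p := by
  set E := K ∩ -K
  have hE : StrictConvex ℝ E := hK.inter hK.neg
  have hEc : IsClosed E := hKc.inter hKc.neg
  have hE0 : E ∈ 𝓝 0 := inter_mem hK0 (neg_mem_nhds_zero X hK0)
  have hEb : Bornology.IsBounded E := hKb.subset inter_subset_left
  have habs : Absorbent ℝ E := absorbent_nhds_zero hE0
  have hbal : Balanced ℝ E := (balanced_iff_neg_mem hE.convex).2 fun x hx =>
    ⟨hx.2, by rw [Set.mem_neg, neg_neg]; exact hx.1⟩
  have hunit : {z | gauge E z ≤ 1} = E := by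
    ext z
    exact (gauge_le_one_iff_mem_closure hE.convex hE0).trans (by rw [hEc.closure_eq])
  obtain ⟨a, ha, hpa⟩ := exists_pos_mul_norm_le_gauge habs hEb
  obtain ⟨b, hb, hpb⟩ := exists_pos_gauge_le_mul_norm hE0
  refine ⟨gauge E, fun x => gauge_eq_zero habs ((NormedSpace.isVonNBounded_iff ℝ).2 hEb),
    fun r x => by rw [gauge_smul hbal, Real.norm_eq_abs], gauge_add_le hE.convex habs,
    ⟨a, b, ha, hb, fun x => ⟨hpa x, hpb x⟩⟩, ?_⟩
  rw [hunit]
  exact hE.isStrictlyConvexBody hEc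

theorem IsEquivStrictlyConvexNorm.exists_strictConvex {p : X → ℝ}
    (hp : IsEquivStrictlyConvexNorm p) :
    ∃ K : Set X, IsClosed K ∧ Bornology.IsBounded K ∧ StrictConvex ℝ K ∧ K ∈ 𝓝 0 := by
  obtain ⟨-, hsmul, hadd, ⟨a, b, ha, hb, hpab⟩, hsc⟩ := hp
  let q : Seminorm ℝ X := Seminorm.of p hadd fun r x => by rw [hsmul, Real.norm_eq_abs]
  have hunit : q.closedBall 0 1 = {z | p z ≤ 1} := q.closedBall_zero_eq
  have hK0 : {z | p z ≤ 1} ∈ 𝓝 0 := mem_of_superset (ball_mem_nhds 0 (one_div_pos.2 hb))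
    fun z hz => (hpab z).2.trans ((lt_div_iff₀' hb).1 (mem_ball_zero_iff.1 hz)).le
  have hconv : Convex ℝ {z | p z ≤ 1} := hunit ▸ q.convex_closedBall 0 1
  have hcont : Continuous p := q.continuous' (r := 1) (hunit ▸ hK0)
  refine ⟨_, isClosed_le hcont continuous_const, ?_, hsc.strictConvex hconv, hK0⟩
  refine (isBounded_closedBall (x := 0) (r := 1 / a)).subset fun z hz => ?_
  exact mem_closedBall_zero_iff.2 ((le_div_iff₀' ha).2 ((hpab z).1.trans hz))

theorem exists_strictConvex_of_isStrictlyConvexBody (hK : K ∈ ConvexBodies X)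
    (hKsc : IsStrictlyConvexBody K) :
    ∃ K' : Set X, IsClosed K' ∧ Bornology.IsBounded K' ∧ StrictConvex ℝ K' ∧ K' ∈ 𝓝 0 := by
  obtain ⟨-, hb, hc, hconv, x, hx⟩ := hK
  exact ⟨-x +ᵥ K, hc.vadd _, hb.vadd _, (hKsc.strictConvex hconv).vadd _,
    neg_vadd_mem_nhds_zero hx⟩

theorem exists_isStrictlyConvexBody_hausdorffDist_lt (hKc : IsClosed K)
    (hKb : Bornology.IsBounded K) (hK : StrictConvex ℝ K) (hK0 : K ∈ 𝓝 0)
    (hB : B ∈ ConvexBodies X) {ε : ℝ} (hε : 0 < ε) :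
    ∃ D ∈ ConvexBodies X, IsStrictlyConvexBody D ∧ hausdorffDist B D < ε := by
  obtain ⟨x, hx⟩ := hB.2.2.2.2
  obtain ⟨-, hB'b, hB'c, hB'conv, -⟩ := vadd_mem_convexBodies hB (-x)
  obtain ⟨R, hR, hBR⟩ := hB'b.subset_closedBall_lt 0 0
  obtain ⟨δ, hδ, hδR⟩ := exists_pos_mul_lt hε R
  set t := max 0 (1 - δ)
  obtain ⟨D, hDc, hD, hD0, htD, hDB⟩ := exists_strictConvex_smul_subset_subset hB'c hB'conv
    (neg_vadd_mem_nhds_zero hx) ((NormedSpace.isVonNBounded_iff ℝ).2 hB'b) hK hKc hK0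
    ((NormedSpace.isVonNBounded_iff ℝ).2 hKb) (le_max_left 0 (1 - δ))
    (max_lt one_pos (by linarith))
  have hDbody : D ∈ ConvexBodies X := ⟨⟨0, mem_of_mem_nhds hD0⟩, hB'b.subset hDB, hDc, hD.convex,
    ⟨0, mem_interior_iff_mem_nhds.2 hD0⟩⟩
  refine ⟨x +ᵥ D, vadd_mem_convexBodies hDbody x,
    (hD.vadd x).isStrictlyConvexBody (hDc.vadd x), ?_⟩
  calc hausdorffDist B (x +ᵥ D) = hausdorffDist (-x +ᵥ B) D := by
        rw [← hausdorffDist_vadd (-x) B, neg_vadd_vadd]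
    _ ≤ (1 - t) * R := hausdorffDist_le_of_smul_subset_subset (max_le zero_le_one (by linarith))
        hR.le hBR htD hDB
    _ ≤ δ * R := by gcongr; linarith [le_max_right 0 (1 - δ)]
    _ < ε := by linarith

end ConvexBodies

theorem strictly_convex_bodies_dense_iff_renorm_general
    {X : Type*} [NormedAddCommGroup X] [NormedSpace ℝ X] :
    (∀ B ∈ ConvexBodies X, ∀ ε > (0 : ℝ),
        ∃ D ∈ ConvexBodies X, IsStrictlyConvexBody D ∧ Metric.hausdorffDist B D < ε) ↔
      ∃ p : X → ℝ, IsEquivStrictlyConvexNorm p := by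
  constructor
  · intro hdense
    obtain ⟨D, hD, hDsc, -⟩ := hdense _ (closedBall_mem_convexBodies 0 one_pos) 1 one_pos
    obtain ⟨K, hKc, hKb, hK, hK0⟩ := exists_strictConvex_of_isStrictlyConvexBody hD hDsc
    exact exists_isEquivStrictlyConvexNorm_of_strictConvex hKc hKb hK hK0
  · rintro ⟨p, hp⟩ B hB ε hε
    obtain ⟨K, hKc, hKb, hK, hK0⟩ := hp.exists_strictConvex
    exact exists_isStrictlyConvexBody_hausdorffDist_lt hKc hKb hK hK0 hB hε

/-- **Theorem 1.1.** In a Banach space `X`, the strictly convex bodies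
are dense in the set of all convex bodies for the Hausdorff metric iff `X` admits an
equivalent strictly convex norm. -/
theorem strictly_convex_bodies_dense_iff_renorm
    {X : Type*} [NormedAddCommGroup X] [NormedSpace ℝ X] [CompleteSpace X] :
    (∀ B ∈ ConvexBodies X, ∀ ε > (0 : ℝ),
        ∃ D ∈ ConvexBodies X, IsStrictlyConvexBody D ∧ Metric.hausdorffDist B D < ε) ↔
      ∃ p : X → ℝ, IsEquivStrictlyConvexNorm p :=
  strictly_convex_bodies_dense_iff_renorm_general
end

section
/- Let X be a Banach space, and let g be a continuous, weak*-lower semicontinuous, positively quadratic homogeneous, coercive convex function on X* with f its Fenchel pre-conjugate on X (i.e., F(f) = g, f continuous positively quadratic homogeneous coercive convex). If g is strictly convex, then f is Gâteaux differentiable at every point of X. -/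
open Set Filter Metric Topology

/-- Gâteaux differentiability of a real-valued function at a point. -/
def GateauxDifferentiableAt {E : Type*} [NormedAddCommGroup E] [NormedSpace ℝ E]
    (f : E → ℝ) (x : E) : Prop :=
  ∃ φ : E →L[ℝ] ℝ, ∀ y : E,
    Tendsto (fun t : ℝ => (f (x + t • y) - f x) / t) (𝓝[≠] (0 : ℝ)) (𝓝 (φ y))

/-!
The one-sided directional derivative `v ↦ f'(x; v)` of a continuous convex function is
sublinear, so by Hahn–Banach each of its values `f'(x; v)` is attained by a continuous
subgradient of `f` at `x`. Every subgradient `φ` at `x` satisfies the Fenchel–Young equality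
`g φ = φ x - f x`, which is affine in `φ`, so strict convexity of `g` leaves room for only one
subgradient. Hence `f'(x; ·)` is that linear functional, and `f'(x; -v) = -f'(x; v)` says that
the left and right derivatives of `f` along every line through `x` agree.
-/

noncomputable def rightLineDeriv {E : Type*} [AddCommGroup E] [Module ℝ E]
    (f : E → ℝ) (x v : E) : ℝ :=
  derivWithin (fun t : ℝ => f (x + t • v)) (Ioi 0) 0

section LineDeriv

variable {E : Type*} [AddCommGroup E] [Module ℝ E] {f : E → ℝ}

lemma rightLineDeriv_zero (x : E) : rightLineDeriv f x 0 = 0 := by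
  simp [rightLineDeriv]

namespace ConvexOn

lemma comp_line (hf : ConvexOn ℝ univ f) (x v : E) :
    ConvexOn ℝ univ (fun t : ℝ => f (x + t • v)) :=
  (hf.translate_right x).comp_linearMap (LinearMap.toSpanSingleton ℝ E v)

lemma hasDerivWithinAt_rightLineDeriv (hf : ConvexOn ℝ univ f) (x v : E) :
    HasDerivWithinAt (fun t : ℝ => f (x + t • v)) (rightLineDeriv f x v) (Ioi 0) 0 :=
  (hf.comp_line x v).hasDerivWithinAt_rightDeriv_of_mem_interior (by simp)

lemma hasDerivWithinAt_Iio_neg_rightLineDeriv_neg (hf : ConvexOn ℝ univ f) (x v : E) :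
    HasDerivWithinAt (fun t : ℝ => f (x + t • v)) (-rightLineDeriv f x (-v)) (Iio 0) 0 := by
  have h := (hf.hasDerivWithinAt_rightLineDeriv x (-v)).comp_of_eq 0
    (hasDerivWithinAt_neg 0 (Iio 0)) (fun t ht => neg_pos.2 ht) neg_zero.symm
  simpa [Function.comp_def] using h

lemma tendsto_slope_rightLineDeriv (hf : ConvexOn ℝ univ f) (x v : E) :
    Tendsto (fun t : ℝ => t⁻¹ * (f (x + t • v) - f x)) (𝓝[>] 0)
      (𝓝 (rightLineDeriv f x v)) := by
  simpa [slope_fun_def_field, div_eq_inv_mul] using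
    (hasDerivWithinAt_iff_tendsto_slope' self_notMem_Ioi).1 (hf.hasDerivWithinAt_rightLineDeriv x v)

lemma rightLineDeriv_le_sub (hf : ConvexOn ℝ univ f) (x v : E) :
    rightLineDeriv f x v ≤ f (x + v) - f x := by
  simpa [slope_def_field] using
    (hf.comp_line x v).le_slope_of_hasDerivWithinAt_Ioi (mem_univ 0) (mem_univ 1) one_pos
      (hf.hasDerivWithinAt_rightLineDeriv x v)

lemma rightLineDeriv_smul (hf : ConvexOn ℝ univ f) (x v : E) {c : ℝ} (hc : 0 < c) :
    rightLineDeriv f x (c • v) = c * rightLineDeriv f x v := by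
  have h := (hf.hasDerivWithinAt_rightLineDeriv x v).comp_of_eq 0
    ((hasDerivWithinAt_id 0 (Ioi 0)).const_mul c) (fun t ht => mul_pos hc ht) (mul_zero c).symm
  refine HasDerivWithinAt.derivWithin ?_ (uniqueDiffWithinAt_Ioi 0)
  simpa [Function.comp_def, mul_comm c, mul_smul] using h

lemma convexOn_rightLineDeriv (hf : ConvexOn ℝ univ f) (x : E) :
    ConvexOn ℝ univ (rightLineDeriv f x) := by
  refine ⟨convex_univ, fun v _ w _ a b ha hb hab => ?_⟩
  refine le_of_tendsto_of_tendsto (hf.tendsto_slope_rightLineDeriv x _)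
    (((hf.tendsto_slope_rightLineDeriv x v).const_mul a).add
      ((hf.tendsto_slope_rightLineDeriv x w).const_mul b)) ?_
  filter_upwards [self_mem_nhdsWithin] with t (ht : 0 < t)
  have hsplit : x + t • (a • v + b • w) = a • (x + t • v) + b • (x + t • w) :=
    calc _ = (a + b) • x + t • (a • v + b • w) := by rw [hab, one_smul]
      _ = _ := by module
  have hjensen := hf.2 (mem_univ (x + t • v)) (mem_univ (x + t • w)) ha hb hab
  rw [← hsplit, smul_eq_mul, smul_eq_mul] at hjensen
  have := mul_le_mul_of_nonneg_left hjensen (inv_nonneg.2 ht.le)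
  linear_combination this + t⁻¹ * f x * hab

lemma rightLineDeriv_add_le (hf : ConvexOn ℝ univ f) (x v w : E) :
    rightLineDeriv f x (v + w) ≤ rightLineDeriv f x v + rightLineDeriv f x w := by
  have hmid := (hf.convexOn_rightLineDeriv x).2 (mem_univ v) (mem_univ w)
    (by norm_num : (0 : ℝ) ≤ 2⁻¹) (by norm_num : (0 : ℝ) ≤ 2⁻¹) (by norm_num)
  have hsplit : v + w = (2 : ℝ) • ((2⁻¹ : ℝ) • v + (2⁻¹ : ℝ) • w) := by module
  rw [hsplit, hf.rightLineDeriv_smul x _ two_pos]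
  simp only [smul_eq_mul] at hmid
  linarith

lemma mul_rightLineDeriv_le (hf : ConvexOn ℝ univ f) (x v : E) (c : ℝ) :
    c * rightLineDeriv f x v ≤ rightLineDeriv f x (c • v) := by
  rcases lt_trichotomy c 0 with hc | rfl | hc
  · have hcancel := hf.rightLineDeriv_add_le x v (-v)
    rw [add_neg_cancel, rightLineDeriv_zero] at hcancel
    rw [← neg_neg c, neg_smul, ← smul_neg, hf.rightLineDeriv_smul x _ (neg_pos.2 hc)]
    nlinarith
  · simp [rightLineDeriv_zero]
  · rw [hf.rightLineDeriv_smul x v hc]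

lemma hasLineDerivAt_of_rightLineDeriv_neg (hf : ConvexOn ℝ univ f) {x v : E}
    (h : rightLineDeriv f x (-v) = -rightLineDeriv f x v) :
    HasLineDerivAt ℝ f (rightLineDeriv f x v) x v := by
  have hleft := hf.hasDerivWithinAt_Iio_neg_rightLineDeriv_neg x v
  rw [h, neg_neg] at hleft
  rw [HasLineDerivAt, hasDerivAt_iff_tendsto_slope_left_right]
  exact ⟨(hasDerivWithinAt_iff_tendsto_slope' self_notMem_Iio).1 hleft,
    (hasDerivWithinAt_iff_tendsto_slope' self_notMem_Ioi).1
      (hf.hasDerivWithinAt_rightLineDeriv x v)⟩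

end ConvexOn

end LineDeriv

lemma LinearMap.continuous_of_le_of_continuousAt_zero {E : Type*} [AddCommGroup E] [Module ℝ E]
    [TopologicalSpace E] [IsTopologicalAddGroup E] (L : E →ₗ[ℝ] ℝ) {h : E → ℝ}
    (hh : ContinuousAt h 0) (h0 : h 0 = 0) (hle : ∀ z, L z ≤ h z) : Continuous L := by
  refine continuous_of_continuousAt_zero L ?_
  have hup : Tendsto h (𝓝 0) (𝓝 0) := h0 ▸ hh.tendsto
  have hlow : Tendsto (fun z => -h (-z)) (𝓝 0) (𝓝 0) := by
    simpa using (hup.comp (continuous_neg.tendsto' (0 : E) 0 neg_zero)).neg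
  rw [ContinuousAt, map_zero]
  refine tendsto_of_tendsto_of_tendsto_of_le_of_le hlow hup (fun z => ?_) hle
  have := hle (-z)
  rw [map_neg] at this
  linarith

section Subgradient

variable {E : Type*} [AddCommGroup E] [Module ℝ E] [TopologicalSpace E] {f : E → ℝ} {x : E}

def HasSubgradientAt (f : E → ℝ) (φ : E →L[ℝ] ℝ) (x : E) : Prop :=
  ∀ y, f x + φ (y - x) ≤ f y

lemma ConvexOn.exists_hasSubgradientAt_apply_eq [IsTopologicalAddGroup E]
    (hf : ConvexOn ℝ univ f) (hfx : ContinuousAt f x) (v : E) :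
    ∃ φ : E →L[ℝ] ℝ, HasSubgradientAt f φ x ∧ φ v = rightLineDeriv f x v := by
  have hker : ∀ c : ℝ, c • v = 0 → (RingHom.id ℝ) c • rightLineDeriv f x v = 0 := by
    intro c hc
    rcases eq_or_ne c 0 with rfl | hc0
    · simp
    · rw [(smul_eq_zero.1 hc).resolve_left hc0, rightLineDeriv_zero, smul_zero]
  obtain ⟨L, hLv, hLp⟩ := exists_extension_of_le_sublinear
    (LinearPMap.mkSpanSingleton' v (rightLineDeriv f x v) hker) (rightLineDeriv f x)
    (fun c hc w => hf.rightLineDeriv_smul x w hc) (hf.rightLineDeriv_add_le x) <| by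
      rintro ⟨w, hw⟩
      obtain ⟨c, rfl⟩ := Submodule.mem_span_singleton.1 hw
      rw [LinearPMap.mkSpanSingleton'_apply]
      exact hf.mul_rightLineDeriv_le x v c
  have hLf : ∀ z, L z ≤ f (x + z) - f x := fun z => (hLp z).trans (hf.rightLineDeriv_le_sub x z)
  have hcont : Continuous L := L.continuous_of_le_of_continuousAt_zero
    ((hfx.comp_of_eq (continuous_const_add x).continuousAt (add_zero x)).sub continuousAt_const)
    (by simp) hLf
  refine ⟨⟨L, hcont⟩, fun y => ?_, ?_⟩
  · have := hLf (y - x)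
    rw [add_sub_cancel] at this
    change f x + L (y - x) ≤ f y
    linarith
  · exact (hLv ⟨v, Submodule.mem_span_singleton_self v⟩).trans
      (LinearPMap.mkSpanSingleton'_apply_self _ _ _ _)

lemma HasSubgradientAt.iSup_sub_eq {φ : E →L[ℝ] ℝ} (hφ : HasSubgradientAt f φ x) :
    ⨆ y, (φ y - f y) = φ x - f x := by
  have hle : ∀ y, φ y - f y ≤ φ x - f x := fun y => by
    have := hφ y
    rw [map_sub] at this
    linarith
  exact le_antisymm (ciSup_le hle) (le_ciSup ⟨_, forall_mem_range.2 hle⟩ x)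

lemma HasSubgradientAt.eq_of_strictConvexOn_conjugate {g : (E →L[ℝ] ℝ) → ℝ}
    (hconj : ∀ φ : E →L[ℝ] ℝ, ⨆ y, (φ y - f y) = g φ) (hg : StrictConvexOn ℝ univ g)
    {φ₁ φ₂ : E →L[ℝ] ℝ} (h₁ : HasSubgradientAt f φ₁ x)
    (h₂ : HasSubgradientAt f φ₂ x) : φ₁ = φ₂ := by
  by_contra hne
  have hmid : HasSubgradientAt f ((2⁻¹ : ℝ) • φ₁ + (2⁻¹ : ℝ) • φ₂) x := by
    intro y
    have := h₁ y
    have := h₂ y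
    simp only [add_apply, smul_apply, smul_eq_mul]
    linarith
  have hlt := hg.2 (mem_univ φ₁) (mem_univ φ₂) hne
    (by norm_num : (0 : ℝ) < 2⁻¹) (by norm_num : (0 : ℝ) < 2⁻¹) (by norm_num)
  rw [← hconj, ← hconj, ← hconj, h₁.iSup_sub_eq, h₂.iSup_sub_eq, hmid.iSup_sub_eq] at hlt
  simp only [add_apply, smul_apply, smul_eq_mul] at hlt
  linarith

end Subgradient

lemma ConvexOn.gateauxDifferentiableAt_of_rightLineDeriv_eq {E : Type*} [NormedAddCommGroup E]
    [NormedSpace ℝ E] {f : E → ℝ} (hf : ConvexOn ℝ univ f) {x : E} (φ : E →L[ℝ] ℝ)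
    (h : ∀ v, rightLineDeriv f x v = φ v) : GateauxDifferentiableAt f x := by
  refine ⟨φ, fun v => ?_⟩
  have hline := hf.hasLineDerivAt_of_rightLineDeriv_neg (v := v) (by rw [h, h, map_neg])
  rw [h] at hline
  simpa [div_eq_inv_mul] using hline.tendsto_slope_zero

theorem gateaux_differentiable_of_dual_strictly_convex_general
    {X : Type*} [NormedAddCommGroup X] [NormedSpace ℝ X]
    (g : (X →L[ℝ] ℝ) → ℝ) (f : X → ℝ)
    (hfcont : Continuous f)
    (hfconv : ConvexOn ℝ univ f)
    (hconj : ∀ φ : X →L[ℝ] ℝ, (⨆ x : X, (φ x - f x)) = g φ)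
    (hstrict : StrictConvexOn ℝ univ g) :
    ∀ x : X, GateauxDifferentiableAt f x := by
  intro x
  obtain ⟨φ, hφ, -⟩ := hfconv.exists_hasSubgradientAt_apply_eq hfcont.continuousAt 0
  refine hfconv.gateauxDifferentiableAt_of_rightLineDeriv_eq φ fun v => ?_
  obtain ⟨ψ, hψ, hψv⟩ := hfconv.exists_hasSubgradientAt_apply_eq hfcont.continuousAt v
  rw [hφ.eq_of_strictConvexOn_conjugate hconj hstrict hψ, hψv]

/-- Let `g` be a continuous, weak*-lower semicontinuous, positively
quadratic homogeneous, coercive convex function on `X*`, and let `f` be the continuous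
positively quadratic homogeneous coercive convex function on `X` with Fenchel conjugate
`g`. If `g` is strictly convex, then `f` is Gâteaux differentiable everywhere. -/
theorem gateaux_differentiable_of_dual_strictly_convex
    {X : Type*} [NormedAddCommGroup X] [NormedSpace ℝ X] [CompleteSpace X]
    (g : (X →L[ℝ] ℝ) → ℝ) (f : X → ℝ)
    (hgcont : Continuous g)
    (hgcoer : Tendsto g (Bornology.cobounded (X →L[ℝ] ℝ)) atTop)
    (hghom : ∀ k : ℝ, 0 ≤ k → ∀ φ, g (k • φ) = k ^ 2 * g φ)
    (hgconv : ConvexOn ℝ univ g)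
    (hglsc : LowerSemicontinuous
      (fun ψ : WeakDual ℝ X => g (StrongDual.toWeakDual.symm ψ)))
    (hfcont : Continuous f)
    (hfcoer : Tendsto f (Bornology.cobounded X) atTop)
    (hfhom : ∀ k : ℝ, 0 ≤ k → ∀ x, f (k • x) = k ^ 2 * f x)
    (hfconv : ConvexOn ℝ univ f)
    (hconj : ∀ φ : X →L[ℝ] ℝ, (⨆ x : X, (φ x - f x)) = g φ)
    (hstrict : StrictConvexOn ℝ univ g) :
    ∀ x : X, GateauxDifferentiableAt f x :=
  gateaux_differentiable_of_dual_strictly_convex_general g f hfcont hfconv hconj hstrict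
end

section
/- Let X be a Banach space, and let g be a continuous, weak*-lower semicontinuous, positively quadratic homogeneous, coercive convex function on X* that is Gâteaux differentiable everywhere. Then the function f on X with Fenchel conjugate F(f) = g (f continuous, positively quadratic homogeneous, coercive, convex) is strictly convex. -/
/-!
If `f` is not strictly convex, it is affine on some segment `[x, y]` with `x ≠ y`. A subgradient
`φ` of `f` at an interior point of that segment (Hahn–Banach applied to the strict epigraph) is then
also a subgradient at `x` and at `y`. By the Fenchel–Young inequality for `g = f*`, both evaluations
`ψ ↦ ψ x` and `ψ ↦ ψ y` are subgradients of `g` at `φ`, and Gâteaux differentiability of `g` at `φ`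
forces them to agree, so `x = y`.
Coercivity and quadratic homogeneity give `f x ≥ c ‖x‖²`, which keeps the suprema defining `g`
finite (`⨆` of an unbounded family of reals is `0`).
-/

open Set Filter Metric Topology

def IsSubgradientAt {E : Type*} [TopologicalSpace E] [AddCommGroup E] [Module ℝ E]
    (f : E → ℝ) (ℓ : StrongDual ℝ E) (x : E) : Prop :=
  ∀ y, f x + ℓ (y - x) ≤ f y

section Subgradient

variable {E : Type*} [TopologicalSpace E] [AddCommGroup E] [Module ℝ E] {f : E → ℝ}
  {ℓ : StrongDual ℝ E}

theorem ConvexOn.exists_isSubgradientAt [IsTopologicalAddGroup E] [ContinuousSMul ℝ E]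
    (hconv : ConvexOn ℝ univ f) (hcont : Continuous f) (m : E) :
    ∃ ℓ : StrongDual ℝ E, IsSubgradientAt f ℓ m := by
  have hopen : IsOpen {p : E × ℝ | f p.1 < p.2} :=
    isOpen_lt (hcont.comp continuous_fst) continuous_snd
  have hconvex : Convex ℝ {p : E × ℝ | f p.1 < p.2} := by
    simpa using hconv.convex_strict_epigraph
  obtain ⟨Φ, hΦ⟩ :=
    geometric_hahn_banach_open_point (x := (m, f m)) hconvex hopen (lt_irrefl (f m))
  -- `(z, f z)` is a limit of points `(z, r)`, `r > f z`, of the open strict epigraph.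
  have hgraph : ∀ z, Φ (z, f z) ≤ Φ (m, f m) := fun z =>
    le_of_tendsto ((Φ.continuous.comp (Continuous.prodMk_right z)).continuousAt.tendsto.mono_left
      nhdsWithin_le_nhds) (eventually_nhdsWithin_of_forall (s := Ioi (f z)) fun r hr =>
        (hΦ (z, r) hr).le)
  have hsplit : ∀ z r, Φ (z, r) = Φ (z, 0) + r * Φ (0, 1) := fun z r => by
    rw [← smul_eq_mul, ← map_smul, ← map_add]
    simp
  have hc : Φ (0, 1) < 0 := by
    have := hΦ (m, f m + 1) (show f m < f m + 1 from lt_add_one _)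
    rw [hsplit m (f m + 1), hsplit m (f m)] at this
    linarith
  refine ⟨(-Φ (0, 1))⁻¹ • Φ.comp (ContinuousLinearMap.inl ℝ E ℝ), fun z => ?_⟩
  have hsub : Φ (z - m, 0) = Φ (z, 0) - Φ (m, 0) := by
    rw [← map_sub, Prod.mk_sub_mk, sub_zero]
  have hz := hgraph z
  rw [hsplit z, hsplit m] at hz
  have hquot : (Φ (z, 0) - Φ (m, 0)) / -Φ (0, 1) ≤ f z - f m := by
    rw [div_le_iff₀ (neg_pos.2 hc)]
    linarith
  simp only [smul_apply, ContinuousLinearMap.comp_apply,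
    ContinuousLinearMap.inl_apply, smul_eq_mul, hsub, inv_mul_eq_div]
  linarith

theorem IsSubgradientAt.of_eq_convexCombination {x y : E} {a b : ℝ}
    (hℓ : IsSubgradientAt f ℓ (a • x + b • y)) (ha : 0 < a) (hb : 0 < b) (hab : a + b = 1)
    (heq : f (a • x + b • y) = a * f x + b * f y) : IsSubgradientAt f ℓ x := by
  set m := a • x + b • y
  set s := f m - a * ℓ x - b * ℓ y
  have hlin : ∀ z, ℓ (z - m) = ℓ z - a * ℓ x - b * ℓ y := fun z => by
    simp only [m, map_sub, map_add, map_smul, smul_eq_mul]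
    ring
  have hx : s + ℓ x ≤ f x := by linarith [hℓ x, hlin x]
  have hy : s + ℓ y ≤ f y := by linarith [hℓ y, hlin y]
  -- The two nonnegative gaps `f x - ℓ x - s` and `f y - ℓ y - s` average to zero.
  have hsum : a * (f x - ℓ x - s) + b * (f y - ℓ y - s) = 0 := by
    linear_combination (-1 : ℝ) * heq - s * hab
  have hxs : f x - ℓ x ≤ s := by
    nlinarith [mul_nonneg hb.le (sub_nonneg.2 hy)]
  intro z
  rw [map_sub]
  linarith [hℓ z, hlin z]

end Subgradient

section NormedSpace

variable {E : Type*} [NormedAddCommGroup E] [NormedSpace ℝ E] {f : E → ℝ}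

theorem IsSubgradientAt.eq_of_tendsto {ℓ Φ : StrongDual ℝ E} {x : E}
    (hℓ : IsSubgradientAt f ℓ x)
    (hΦ : ∀ v, Tendsto (fun t : ℝ => (f (x + t • v) - f x) / t) (𝓝[≠] 0) (𝓝 (Φ v))) :
    ℓ = Φ := by
  ext v
  have hquot : ∀ t, t * ℓ v ≤ f (x + t • v) - f x := fun t => by
    have := hℓ (x + t • v)
    rw [add_sub_cancel_left, map_smul, smul_eq_mul] at this
    linarith
  refine le_antisymm (ge_of_tendsto ((hΦ v).mono_left (nhdsGT_le_nhdsNE 0)) ?_)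
    (le_of_tendsto ((hΦ v).mono_left (nhdsLT_le_nhdsNE 0)) ?_)
  · filter_upwards [self_mem_nhdsWithin] with t (ht : 0 < t)
    rw [le_div_iff₀' ht]
    exact hquot t
  · filter_upwards [self_mem_nhdsWithin] with t (ht : t < 0)
    rw [div_le_iff_of_neg' ht]
    exact hquot t

theorem GateauxDifferentiableAt.isSubgradientAt_unique {ℓ₁ ℓ₂ : StrongDual ℝ E} {x : E}
    (hf : GateauxDifferentiableAt f x) (h₁ : IsSubgradientAt f ℓ₁ x)
    (h₂ : IsSubgradientAt f ℓ₂ x) : ℓ₁ = ℓ₂ := by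
  obtain ⟨Φ, hΦ⟩ := hf
  rw [h₁.eq_of_tendsto hΦ, h₂.eq_of_tendsto hΦ]

theorem exists_pos_mul_norm_sq_le (hhom : ∀ k : ℝ, 0 ≤ k → ∀ x, f (k • x) = k ^ 2 * f x)
    (hcoer : Tendsto f (Bornology.cobounded E) atTop) : ∃ c > 0, ∀ x, c * ‖x‖ ^ 2 ≤ f x := by
  obtain ⟨R, -, hR⟩ := (Filter.hasBasis_cobounded_norm.eventually_iff).1
    (hcoer.eventually_ge_atTop 1)
  set r := max R 1
  have hr : 0 < r := lt_of_lt_of_le one_pos (le_max_right R 1)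
  refine ⟨(r ^ 2)⁻¹, by positivity, fun x => ?_⟩
  rcases eq_or_ne x 0 with rfl | hx
  · have hf0 : f 0 = 0 := by simpa using hhom 0 le_rfl 0
    simp [hf0]
  have hx : 0 < ‖x‖ := norm_pos_iff.2 hx
  have hw : 1 ≤ f ((r / ‖x‖) • x) := hR <| by
    rw [mem_ofPred_eq, norm_smul, Real.norm_of_nonneg (by positivity), div_mul_cancel₀ _ hx.ne']
    exact le_max_left R 1
  have hfx : f x = (‖x‖ / r) ^ 2 * f ((r / ‖x‖) • x) := by
    rw [← hhom _ (by positivity), smul_smul, div_mul_div_cancel₀ hr.ne', div_self hx.ne',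
      one_smul]
  calc (r ^ 2)⁻¹ * ‖x‖ ^ 2 = (‖x‖ / r) ^ 2 * 1 := by field_simp
    _ ≤ (‖x‖ / r) ^ 2 * f ((r / ‖x‖) • x) := by gcongr
    _ = f x := hfx.symm

theorem bddAbove_range_dual_sub {c : ℝ} (hc : 0 < c) (hf : ∀ x, c * ‖x‖ ^ 2 ≤ f x)
    (ψ : StrongDual ℝ E) : BddAbove (range fun x => ψ x - f x) := by
  refine ⟨‖ψ‖ ^ 2 / (4 * c), forall_mem_range.2 fun x => ?_⟩
  have hx : ψ x - f x ≤ ‖ψ‖ * ‖x‖ - c * ‖x‖ ^ 2 := by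
    linarith [(le_abs_self (ψ x)).trans (ψ.le_opNorm x), hf x]
  rw [le_div_iff₀ (by positivity)]
  nlinarith [sq_nonneg (2 * c * ‖x‖ - ‖ψ‖)]

end NormedSpace

theorem IsSubgradientAt.inclusionInDoubleDual_isSubgradientAt {X : Type*} [NormedAddCommGroup X]
    [NormedSpace ℝ X] {f : X → ℝ} {g : StrongDual ℝ X → ℝ} {φ : StrongDual ℝ X} {x : X}
    (hbdd : ∀ ψ : StrongDual ℝ X, BddAbove (range fun z => ψ z - f z))
    (hconj : ∀ ψ : StrongDual ℝ X, ⨆ z, (ψ z - f z) = g ψ) (hφ : IsSubgradientAt f φ x) :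
    IsSubgradientAt g (NormedSpace.inclusionInDoubleDual ℝ X x) φ := by
  have hgφ : g φ ≤ φ x - f x := by
    rw [← hconj φ]
    refine ciSup_le fun z => ?_
    linarith [hφ z, map_sub φ z x]
  intro ψ
  have hgψ : ψ x - f x ≤ g ψ := hconj ψ ▸ le_ciSup (hbdd ψ) x
  simp only [NormedSpace.dual_def, sub_apply]
  linarith

theorem strictly_convex_of_dual_gateaux_differentiable_general
    {X : Type*} [NormedAddCommGroup X] [NormedSpace ℝ X]
    (g : (X →L[ℝ] ℝ) → ℝ) (f : X → ℝ)
    (hgdiff : ∀ φ : X →L[ℝ] ℝ, GateauxDifferentiableAt g φ)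
    (hfcont : Continuous f)
    (hfcoer : Tendsto f (Bornology.cobounded X) atTop)
    (hfhom : ∀ k : ℝ, 0 ≤ k → ∀ x, f (k • x) = k ^ 2 * f x)
    (hfconv : ConvexOn ℝ univ f)
    (hconj : ∀ φ : X →L[ℝ] ℝ, (⨆ x : X, (φ x - f x)) = g φ) :
    StrictConvexOn ℝ univ f := by
  obtain ⟨c, hc, hfc⟩ := exists_pos_mul_norm_sq_le hfhom hfcoer
  have hbdd := bddAbove_range_dual_sub hc hfc
  refine ⟨convex_univ, fun x _ y _ hxy a b ha hb hab => ?_⟩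
  refine (hfconv.2 trivial trivial ha.le hb.le hab).lt_of_ne fun heq => hxy ?_
  obtain ⟨φ, hφ⟩ := hfconv.exists_isSubgradientAt hfcont (a • x + b • y)
  have hφx := hφ.of_eq_convexCombination ha hb hab heq
  rw [add_comm (a • x)] at hφ heq
  rw [add_comm (a • f x)] at heq
  have hφy := hφ.of_eq_convexCombination hb ha (by linarith) heq
  exact (NormedSpace.inclusionInDoubleDualLi ℝ).injective <|
    (hgdiff φ).isSubgradientAt_unique (hφx.inclusionInDoubleDual_isSubgradientAt hbdd hconj)
      (hφy.inclusionInDoubleDual_isSubgradientAt hbdd hconj)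

/-- Let `g` be a continuous, weak*-lower semicontinuous, positively
quadratic homogeneous, coercive convex function on `X*` that is Gâteaux differentiable
everywhere, and let `f` be the continuous positively quadratic homogeneous coercive
convex function on `X` with Fenchel conjugate `g`. Then `f` is strictly convex. -/
theorem strictly_convex_of_dual_gateaux_differentiable
    {X : Type*} [NormedAddCommGroup X] [NormedSpace ℝ X] [CompleteSpace X]
    (g : (X →L[ℝ] ℝ) → ℝ) (f : X → ℝ)
    (hgcont : Continuous g)
    (hgcoer : Tendsto g (Bornology.cobounded (X →L[ℝ] ℝ)) atTop)
    (hghom : ∀ k : ℝ, 0 ≤ k → ∀ φ, g (k • φ) = k ^ 2 * g φ)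
    (hgconv : ConvexOn ℝ univ g)
    (hglsc : LowerSemicontinuous
      (fun ψ : WeakDual ℝ X => g (StrongDual.toWeakDual.symm ψ)))
    (hgdiff : ∀ φ : X →L[ℝ] ℝ, GateauxDifferentiableAt g φ)
    (hfcont : Continuous f)
    (hfcoer : Tendsto f (Bornology.cobounded X) atTop)
    (hfhom : ∀ k : ℝ, 0 ≤ k → ∀ x, f (k • x) = k ^ 2 * f x)
    (hfconv : ConvexOn ℝ univ f)
    (hconj : ∀ φ : X →L[ℝ] ℝ, (⨆ x : X, (φ x - f x)) = g φ) :
    StrictConvexOn ℝ univ f :=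
  strictly_convex_of_dual_gateaux_differentiable_general g f hgdiff hfcont hfcoer hfhom hfconv hconj
end
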